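/- arXiv:1212.0157 — 6 statements merged into one kernel-verified Lean document; each statement's English description precedes it below -/
import Mathlib

section
/- Let m, n, k ≥ 1 and let f : [ℕ]^{m+1} → Fin k be any coloring. Define g : [ℕ]^{mn+1} → (Fin k)^n by g(x, y₀, …, y_{n-1}) = (f(x, y₀), …, f(x, y_{n-1})) for x < y₀ < ⋯ < y_{n-1} where each yᵢ is an m-element block. Then for every infinite set H ⊆ ℕ that is thin for g (omits some tuple-color), there exists an infinite set R ⊆ H that is thin for f. -/
/-- The index, inside an increasing `(m*n+1)`-tuple `x < y₀ < ⋯ < y_{n-1}` (where each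
`yᵢ` is an `m`-element block), of the `t`-th element of the `(m+1)`-tuple `(x, yᵢ)`:
position `0` for `t = 0`, and position `i*m + t` for `1 ≤ t ≤ m`. -/
def blockIndex (m n : ℕ) (i : Fin n) (t : Fin (m + 1)) : Fin (m * n + 1) :=
  if (t : ℕ) = 0 then ⟨0, Nat.succ_pos _⟩
  else ⟨(i : ℕ) * m + (t : ℕ), by
    have h1 : (i : ℕ) + 1 ≤ n := i.isLt
    have h2 : (t : ℕ) ≤ m := Nat.lt_succ_iff.mp t.isLt
    have h3 : ((i : ℕ) + 1) * m ≤ n * m := Nat.mul_le_mul_right m h1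
    have h5 : (i : ℕ) * m + m = ((i : ℕ) + 1) * m := by ring
    have h6 : n * m = m * n := Nat.mul_comm n m
    omega⟩

/-- Prepend `x` to an `m`-tuple `y`. -/
def Ucons (m x : ℕ) (y : Fin m → ℕ) : Fin (m + 1) → ℕ :=
  fun t => if h : (t : ℕ) = 0 then x else y ⟨(t : ℕ) - 1, by have := t.isLt; omega⟩

/-- Let `m, n, k ≥ 1` and `f : [ℕ]^{m+1} → Fin k`.  Define
`g : [ℕ]^{mn+1} → (Fin k)^n` by `g(x, y₀, …, y_{n-1}) = (f(x,y₀), …, f(x,y_{n-1}))`,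
where each `yᵢ` is an `m`-element block.  Then every infinite set `H` thin for `g`
(omitting some tuple-color) has an infinite subset `R` thin for `f`. -/
theorem stmt2 (m n k : ℕ) (hm : 1 ≤ m) (hn : 1 ≤ n) (hk : 1 ≤ k)
    (f : (Fin (m + 1) → ℕ) → Fin k)
    (g : (Fin (m * n + 1) → ℕ) → Fin n → Fin k)
    (hg : ∀ z : Fin (m * n + 1) → ℕ, ∀ i : Fin n,
      g z i = f fun t => z (blockIndex m n i t))
    (H : Set ℕ) (hH : H.Infinite)
    (hthin : ∃ c : Fin n → Fin k, ∀ z : Fin (m * n + 1) → ℕ,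
      StrictMono z → (∀ a, z a ∈ H) → g z ≠ c) :
    ∃ R ⊆ H, R.Infinite ∧ ∃ c : Fin k, ∀ u : Fin (m + 1) → ℕ,
      StrictMono u → (∀ a, u a ∈ R) → f u ≠ c := by
  obtain ⟨c, hc⟩ := hthin
  have hm0 : 0 < m := hm
  have hn0 : 0 < n := hn
  -- Key lemma: for every `x ∈ H` there is a color `c i` and a bound `b` such that
  -- no `m`-block from `H` above `b`, prefixed by `x`, gets color `c i` under `f`.
  have key : ∀ x ∈ H, ∃ i : Fin n, ∃ b, x ≤ b ∧
      ∀ y : Fin m → ℕ, StrictMono y → (∀ s, y s ∈ H ∧ b < y s) →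
        f (Ucons m x y) ≠ c i := by
    intro x hx
    by_contra hcon
    push_neg at hcon
    choose pick hmono hmem hcol using
      fun (i : Fin n) (b : ℕ) => hcon i (max x b) (le_max_left _ _)
    set idx : ℕ → Fin n := fun j => ⟨j % n, Nat.mod_lt j hn0⟩ with hidx
    obtain ⟨Y, hY0, hYS⟩ : ∃ Y : ℕ → Fin m → ℕ, Y 0 = pick (idx 0) x ∧
        ∀ j, Y (j + 1) = pick (idx (j + 1)) (Y j ⟨m - 1, by omega⟩) :=
      ⟨fun j => Nat.rec (pick (idx 0) x)
        (fun j prev => pick (idx (j + 1)) (prev ⟨m - 1, by omega⟩)) j, rfl, fun _ => rfl⟩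
    have hYmono : ∀ j, StrictMono (Y j) := by
      intro j
      cases j with
      | zero => rw [hY0]; exact hmono _ _
      | succ j => rw [hYS]; exact hmono _ _
    have hYmem : ∀ j s, Y j s ∈ H := by
      intro j s
      cases j with
      | zero => rw [hY0]; exact (hmem _ _ s).1
      | succ j => rw [hYS]; exact (hmem _ _ s).1
    have hYx : ∀ j s, x < Y j s := by
      intro j s
      cases j with
      | zero => rw [hY0]; exact lt_of_le_of_lt (le_max_left _ _) (hmem _ _ s).2
      | succ j => rw [hYS]; exact lt_of_le_of_lt (le_max_left _ _) (hmem _ _ s).2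
    have hchain : ∀ j s s', Y j s < Y (j + 1) s' := by
      intro j s s'
      have h1 : Y j s ≤ Y j ⟨m - 1, by omega⟩ := by
        apply (hYmono j).monotone
        have := s.isLt
        show (s : ℕ) ≤ m - 1
        omega
      have h2 : Y j ⟨m - 1, by omega⟩ < Y (j + 1) s' := by
        rw [hYS]
        exact lt_of_le_of_lt (le_max_right _ _) (hmem _ _ s').2
      exact lt_of_le_of_lt h1 h2
    have hYlt : ∀ j j', j < j' → ∀ s s', Y j s < Y j' s' := by
      intro j j' hjj'
      induction j' with
      | zero => omega
      | succ j' ih =>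
        intro s s'
        rcases Nat.lt_or_ge j j' with h | h
        · exact lt_trans (ih h s ⟨0, hm0⟩) (hchain j' _ s')
        · have : j = j' := by omega
          subst this
          exact hchain j s s'
    have hYcol : ∀ j, f (Ucons m x (Y j)) = c (idx j) := by
      intro j
      cases j with
      | zero => rw [hY0]; exact hcol _ _
      | succ j => rw [hYS]; exact hcol _ _
    -- assemble the big tuple
    set Z : Fin (m * n + 1) → ℕ := fun p =>
      if (p : ℕ) = 0 then x
      else Y (((p : ℕ) - 1) / m) ⟨((p : ℕ) - 1) % m, Nat.mod_lt _ hm0⟩ with hZ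
    have hZmono : StrictMono Z := by
      intro p q hpq
      have hpq' : (p : ℕ) < (q : ℕ) := hpq
      by_cases hp : (p : ℕ) = 0
      · have hq : (q : ℕ) ≠ 0 := by omega
        simp only [hZ, hp, if_pos rfl, if_neg hq]
        exact hYx _ _
      · have hq : (q : ℕ) ≠ 0 := by omega
        simp only [hZ, if_neg hp, if_neg hq]
        have e1 := Nat.div_add_mod ((p : ℕ) - 1) m
        have e2 := Nat.div_add_mod ((q : ℕ) - 1) m
        have hmod1 : ((p : ℕ) - 1) % m < m := Nat.mod_lt _ hm0
        have hmod2 : ((q : ℕ) - 1) % m < m := Nat.mod_lt _ hm0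
        have hdle : ((p : ℕ) - 1) / m ≤ ((q : ℕ) - 1) / m :=
          Nat.div_le_div_right (by omega)
        rcases Nat.lt_or_ge (((p : ℕ) - 1) / m) (((q : ℕ) - 1) / m) with h | h
        · exact hYlt _ _ h _ _
        · have heq : ((p : ℕ) - 1) / m = ((q : ℕ) - 1) / m := le_antisymm hdle h
          rw [heq] at e1
          have hs : ((p : ℕ) - 1) % m < ((q : ℕ) - 1) % m := by omega
          rw [heq]
          exact hYmono _ (Fin.mk_lt_mk.mpr hs)
    have hZmem : ∀ p, Z p ∈ H := by
      intro p
      by_cases hp : (p : ℕ) = 0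
      · simp only [hZ, if_pos hp]; exact hx
      · simp only [hZ, if_neg hp]; exact hYmem _ _
    apply hc Z hZmono hZmem
    funext i
    rw [hg]
    have huq : (fun t => Z (blockIndex m n i t)) = Ucons m x (Y i) := by
      funext t
      by_cases ht : (t : ℕ) = 0
      · simp only [blockIndex, if_pos ht, Ucons, dif_pos ht, hZ]
        simp
      · have ht1 : 1 ≤ (t : ℕ) := Nat.pos_of_ne_zero ht
        have htm : (t : ℕ) ≤ m := Nat.lt_succ_iff.mp t.isLt
        have hne : (i : ℕ) * m + (t : ℕ) ≠ 0 := by omega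
        have harith : (i : ℕ) * m + (t : ℕ) - 1 = m * (i : ℕ) + ((t : ℕ) - 1) := by
          have : (i : ℕ) * m = m * (i : ℕ) := Nat.mul_comm _ _
          omega
        have hdv : ((i : ℕ) * m + (t : ℕ) - 1) / m = (i : ℕ) := by
          rw [harith, Nat.mul_add_div hm0, Nat.div_eq_of_lt (by omega), Nat.add_zero]
        have hmd : ((i : ℕ) * m + (t : ℕ) - 1) % m = (t : ℕ) - 1 := by
          rw [harith, Nat.mul_add_mod, Nat.mod_eq_of_lt (by omega)]
        simp only [blockIndex, if_neg ht, Ucons, dif_neg ht, hZ]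
        rw [if_neg hne]
        simp only [hdv, hmd]
    rw [huq, hYcol]
    congr 1
    exact Fin.ext (Nat.mod_eq_of_lt i.isLt)
  -- Construct the sequence of stuck points and bounds.
  choose px hpxH hpxgt using fun b : ℕ => hH.exists_gt b
  choose I B hIB hBprop using fun b : ℕ => key (px b) (hpxH b)
  obtain ⟨bs, hbs0, hbsS⟩ : ∃ bs : ℕ → ℕ, bs 0 = 0 ∧ ∀ j, bs (j + 1) = B (bs j) :=
    ⟨fun j => Nat.rec 0 (fun _ prev => B prev) j, rfl, fun _ => rfl⟩
  set xs : ℕ → ℕ := fun j => px (bs j) with hxs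
  have hbslt : ∀ j, bs j < bs (j + 1) := by
    intro j
    rw [hbsS]
    exact lt_of_lt_of_le (hpxgt (bs j)) (hIB (bs j))
  have hbsmono : StrictMono bs := strictMono_nat_of_lt_succ hbslt
  have hxslt : ∀ j, xs j < xs (j + 1) := by
    intro j
    have h1 : xs j ≤ bs (j + 1) := by rw [hbsS]; exact hIB (bs j)
    exact lt_of_le_of_lt h1 (hpxgt (bs (j + 1)))
  have hxsmono : StrictMono xs := strictMono_nat_of_lt_succ hxslt
  obtain ⟨cstar, hfib⟩ := Finite.exists_infinite_fiber (fun j => c (I (bs j)))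
  have hJinf : ((fun j => c (I (bs j))) ⁻¹' {cstar}).Infinite :=
    Set.infinite_coe_iff.mp hfib
  refine ⟨xs '' ((fun j => c (I (bs j))) ⁻¹' {cstar}), ?_, ?_, cstar, ?_⟩
  · rintro r ⟨j, _, rfl⟩
    exact hpxH _
  · exact hJinf.image (hxsmono.injective.injOn)
  · intro u hu humem
    have humem' : ∀ a, ∃ j, (fun j => c (I (bs j))) j = cstar ∧ xs j = u a := by
      intro a
      obtain ⟨j, hj1, hj2⟩ := humem a
      exact ⟨j, hj1, hj2⟩
    choose jj hjcol hjeq using humem'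
    have hjgt : ∀ t : Fin (m + 1), (t : ℕ) ≠ 0 → jj 0 < jj t := by
      intro t ht
      have h0 : (0 : Fin (m + 1)) < t := by
        rw [Fin.lt_def]; simpa using Nat.pos_of_ne_zero ht
      have : xs (jj 0) < xs (jj t) := by rw [hjeq, hjeq]; exact hu h0
      exact hxsmono.lt_iff_lt.mp this
    set y : Fin m → ℕ := fun s => u s.succ with hy
    have hymono : StrictMono y := by
      intro s s' hss'
      exact hu (Fin.succ_lt_succ_iff.mpr hss')
    have hymem : ∀ s, y s ∈ H ∧ bs (jj 0 + 1) < y s := by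
      intro s
      have hne : ((s.succ : Fin (m + 1)) : ℕ) ≠ 0 := by simp [Fin.val_succ]
      have hb : jj 0 + 1 ≤ jj s.succ := hjgt s.succ hne
      constructor
      · rw [hy]
        dsimp only
        rw [← hjeq s.succ]
        exact hpxH _
      · have h1 : bs (jj 0 + 1) ≤ bs (jj s.succ) := hbsmono.monotone hb
        have h2 : bs (jj s.succ) < xs (jj s.succ) := hpxgt _
        rw [hy]
        dsimp only
        rw [← hjeq s.succ]
        omega
    have hprop := hBprop (bs (jj 0)) y hymono (by rw [← hbsS]; exact hymem)
    have hueq : u = Ucons m (px (bs (jj 0))) y := by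
      funext t
      by_cases ht : (t : ℕ) = 0
      · have : t = 0 := Fin.ext ht
        rw [this, Ucons]
        simp only [Fin.val_zero, if_pos rfl]
        exact (hjeq 0).symm
      · rw [Ucons]
        simp only [dif_neg ht]
        rw [hy]
        dsimp only
        congr 1
        exact Fin.ext (by simp [Fin.val_succ]; omega)
    rw [hueq]
    intro hfu
    exact hprop (hfu.trans (hjcol 0).symm)
end

section
/- Let ⟨Tᵢ : i ∈ ℕ⟩ be a sequence of trees in 2^{<ω} such that the measure of the path set of Tᵢ is at least qᵢ, where each qᵢ ∈ (0,1] and ∏ᵢ qᵢ ≥ r > 0. Let S be the interleaving tree: σ ∈ S iff for every i, the subsequence of σ along the i-th column (positions coding pairs ⟨i,·⟩) is in Tᵢ. Then the measure of the path set of S equals ∏ᵢ μ([Tᵢ]) ≥ r > 0, and every infinite path B of S continuously determines a sequence ⟨Bᵢ⟩ where each Bᵢ is an infinite path through Tᵢ. -/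
open MeasureTheory

/-- The binary-digit expansion map `[0,1) → 2^ω`. -/
noncomputable def binDigits (x : ℝ) : ℕ → Bool := fun n => decide (⌊x * 2 ^ (n + 1)⌋ % 2 = 1)

/-- The uniform (fair-coin product) measure on Cantor space, realized as the
pushforward of Lebesgue measure on `[0,1)` under binary expansion. -/
noncomputable def cantorMeasure : Measure (ℕ → Bool) :=
  (volume.restrict (Set.Ico (0 : ℝ) 1)).map binDigits

/-- A tree is a prefix-closed set of finite binary strings. -/
def IsTree (T : Set (List Bool)) : Prop := ∀ l ∈ T, ∀ l', l' <+: l → l' ∈ T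

/-- The set of infinite paths through a tree. -/
def pathSet (T : Set (List Bool)) : Set (ℕ → Bool) :=
  {X | ∀ n, (List.range n).map X ∈ T}

/-- The subsequence of a finite string `σ` along the `i`-th column: the values of
`σ` at the positions coding pairs `⟨i, ·⟩` (in increasing order). -/
def colPrefix (i : ℕ) (σ : List Bool) : List Bool :=
  ((List.range σ.length).filter fun p => p.unpair.1 = i).map fun p => σ.getD p false

/-- The interleaving tree of a sequence of trees: `σ ∈ S` iff for every `i`, the
subsequence of `σ` along the `i`-th column is in `Tᵢ`. -/
def interleaveTree (T : ℕ → Set (List Bool)) : Set (List Bool) :=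
  {σ | ∀ i, colPrefix i σ ∈ T i}

/-!
Both `cantorMeasure` and the product of fair coins give mass `2⁻ⁿ` to every cylinder of length
`n` (the reals in `[0,1)` with `n` prescribed binary digits form one dyadic interval), and
cylinders are a π-system generating the product σ-algebra, so the two measures agree. For the
product measure, splitting `B` into its columns `i ↦ (x ↦ B ⟨i, x⟩)` is measure preserving onto
a product of copies of itself, and `[S]` is the preimage of the box `∏ᵢ [Tᵢ]`: the column
subsequences of the prefixes of `B` are exactly the prefixes of its columns.
-/

def cylinders : Set (Set (ℕ → Bool)) := {s | ∃ X n, PiNat.cylinder X n = s}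

theorem isPiSystem_cylinders : IsPiSystem cylinders := by
  rintro _ ⟨X, m, rfl⟩ _ ⟨Y, n, rfl⟩ ⟨Z, hX, hY⟩
  refine ⟨Z, max m n, ?_⟩
  rw [← PiNat.mem_cylinder_iff_eq.1 hX, ← PiNat.mem_cylinder_iff_eq.1 hY]
  ext W
  simp only [PiNat.mem_cylinder_iff, Set.mem_inter_iff, lt_max_iff]
  grind

theorem measurableSet_generateFrom_cylinders {P : Set (ℕ → Bool)} {n : ℕ}
    (hP : ∀ X ∈ P, PiNat.cylinder X n ⊆ P) :
    MeasurableSet[MeasurableSpace.generateFrom cylinders] P := by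
  -- indexing cylinders by finsets (through their indicators) makes the union countable
  have hP_eq : P = ⋃ (s : Finset ℕ) (_ : (fun i => decide (i ∈ s)) ∈ P),
      PiNat.cylinder (fun i => decide (i ∈ s)) n := by
    refine subset_antisymm (fun X hX => ?_) (Set.iUnion₂_subset fun s hs => hP _ hs)
    have hXs : X ∈ PiNat.cylinder (fun i => decide (i ∈ (Finset.range n).filter (X ·))) n := by
      simp +contextual [PiNat.mem_cylinder_iff]
    exact Set.mem_iUnion₂.2 ⟨_, hP X hX ((PiNat.mem_cylinder_comm _ _ _).1 hXs), hXs⟩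
  rw [hP_eq]
  exact .iUnion fun s => .iUnion fun _ =>
    MeasurableSpace.measurableSet_generateFrom ⟨_, n, rfl⟩

theorem generateFrom_cylinders : MeasurableSpace.generateFrom cylinders = MeasurableSpace.pi := by
  refine le_antisymm (MeasurableSpace.generateFrom_le ?_) (iSup_le fun k => ?_)
  · rintro _ ⟨X, n, rfl⟩
    rw [PiNat.cylinder_eq_pi]
    exact .pi (Set.to_countable _) fun _ _ => measurableSet_singleton _
  · refine (measurable_to_bool (measurableSet_generateFrom_cylinders (n := k + 1) ?_)).comap_le
    intro X hX Y hY
    simp only [Set.mem_preimage, PiNat.mem_cylinder_iff] at hX hY ⊢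
    rwa [hY k k.lt_succ_self]

theorem measurable_binDigits : Measurable binDigits :=
  measurable_pi_lambda _ fun _ =>
    (measurable_from_top (f := fun z : ℤ => decide (z % 2 = 1))).comp
      (Int.measurable_floor.comp (measurable_id.mul_const _))

theorem binDigits_eq_decide_natFloor {x : ℝ} (hx : 0 ≤ x) (k : ℕ) :
    binDigits x k = decide (⌊x * 2 ^ (k + 1)⌋₊ % 2 = 1) := by
  rw [binDigits, ← Int.natCast_floor_eq_floor (by positivity), decide_eq_decide]
  omega

theorem natFloor_mul_two_pow_succ_div_two {x : ℝ} (n : ℕ) :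
    ⌊x * 2 ^ (n + 1)⌋₊ / 2 = ⌊x * 2 ^ n⌋₊ := by
  rw [← Nat.floor_div_natCast, pow_succ, Nat.cast_ofNat, ← mul_assoc,
    mul_div_cancel_right₀ _ two_ne_zero]

-- `[m / 2ⁿ, (m + 1) / 2ⁿ)` with `m = dyadicIndex X n` is the set of reals whose first `n`
-- binary digits are those of `X`.
def dyadicIndex (X : ℕ → Bool) : ℕ → ℕ
  | 0 => 0
  | n + 1 => 2 * dyadicIndex X n + (X n).toNat

theorem dyadicIndex_lt (X : ℕ → Bool) (n : ℕ) : dyadicIndex X n < 2 ^ n := by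
  induction n with
  | zero => simp [dyadicIndex]
  | succ n ih =>
    have := Bool.toNat_le (X n)
    rw [dyadicIndex, pow_succ]
    omega

theorem binDigits_mem_cylinder_iff {x : ℝ} (hx : x ∈ Set.Ico (0 : ℝ) 1) (X : ℕ → Bool) (n : ℕ) :
    binDigits x ∈ PiNat.cylinder X n ↔ ⌊x * 2 ^ n⌋₊ = dyadicIndex X n := by
  induction n with
  | zero => simp [dyadicIndex, Nat.floor_eq_zero.2 hx.2]
  | succ n ih =>
    have hsucc : binDigits x ∈ PiNat.cylinder X (n + 1) ↔
        binDigits x ∈ PiNat.cylinder X n ∧ binDigits x n = X n := by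
      simp only [PiNat.mem_cylinder_iff, Nat.forall_lt_succ_right]
    rw [hsucc, ih, binDigits_eq_decide_natFloor hx.1, ← natFloor_mul_two_pow_succ_div_two,
      dyadicIndex]
    have := Nat.div_add_mod ⌊x * 2 ^ (n + 1)⌋₊ 2
    have := Nat.mod_lt ⌊x * 2 ^ (n + 1)⌋₊ two_pos
    cases X n <;>
      simp only [decide_eq_false_iff_not, Nat.mod_two_not_eq_one, decide_eq_true_eq,
        Bool.toNat_false, Bool.toNat_true, add_zero] <;> omega

theorem measurableSet_cylinder (X : ℕ → Bool) (n : ℕ) : MeasurableSet (PiNat.cylinder X n) :=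
  generateFrom_cylinders ▸ MeasurableSpace.measurableSet_generateFrom ⟨X, n, rfl⟩

theorem natFloor_mul_two_pow_eq_iff {x : ℝ} {m n : ℕ} (hm : m < 2 ^ n) :
    x ∈ Set.Ico (0 : ℝ) 1 ∧ ⌊x * 2 ^ n⌋₊ = m ↔ x ∈ Set.Ico ((m : ℝ) / 2 ^ n) ((m + 1) / 2 ^ n) := by
  have h2n : (0 : ℝ) < 2 ^ n := by positivity
  have hm1 : (m : ℝ) + 1 ≤ 2 ^ n := by exact_mod_cast hm
  simp only [Set.mem_Ico, div_le_iff₀ h2n, lt_div_iff₀ h2n]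
  constructor
  · rintro ⟨⟨hx0, -⟩, hfl⟩
    exact (Nat.floor_eq_iff (by positivity)).1 hfl
  · rintro ⟨hlo, hhi⟩
    have hx0 : 0 ≤ x := nonneg_of_mul_nonneg_left (le_trans m.cast_nonneg hlo) h2n
    refine ⟨⟨hx0, ?_⟩, (Nat.floor_eq_iff (by positivity)).2 ⟨hlo, hhi⟩⟩
    nlinarith

theorem cantorMeasure_cylinder (X : ℕ → Bool) (n : ℕ) :
    cantorMeasure (PiNat.cylinder X n) = 2⁻¹ ^ n := by
  have hpre : binDigits ⁻¹' PiNat.cylinder X n ∩ Set.Ico 0 1 =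
      Set.Ico ((dyadicIndex X n : ℝ) / 2 ^ n) ((dyadicIndex X n + 1) / 2 ^ n) := by
    ext x
    rw [← natFloor_mul_two_pow_eq_iff (dyadicIndex_lt X n), Set.mem_inter_iff, Set.mem_preimage]
    exact ⟨fun ⟨h, hx⟩ => ⟨hx, (binDigits_mem_cylinder_iff hx X n).1 h⟩,
      fun ⟨hx, h⟩ => ⟨(binDigits_mem_cylinder_iff hx X n).2 h, hx⟩⟩
  rw [cantorMeasure, Measure.map_apply measurable_binDigits (measurableSet_cylinder X n),
    Measure.restrict_apply (measurable_binDigits (measurableSet_cylinder X n)), hpre,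
    Real.volume_Ico, ← sub_div, add_sub_cancel_left, one_div,
    ENNReal.ofReal_inv_of_pos (by positivity),
    ENNReal.ofReal_pow zero_le_two, ENNReal.ofReal_ofNat, ENNReal.inv_pow]

noncomputable abbrev fairCoin : Measure Bool := (PMF.uniformOfFintype Bool).toMeasure

theorem infinitePi_fairCoin_cylinder (X : ℕ → Bool) (n : ℕ) :
    Measure.infinitePi (fun _ => fairCoin) (PiNat.cylinder X n) = 2⁻¹ ^ n := by
  rw [PiNat.cylinder_eq_pi, Measure.infinitePi_pi _ fun _ _ => measurableSet_singleton _]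
  simp

theorem cantorMeasure_eq_infinitePi : cantorMeasure = Measure.infinitePi fun _ => fairCoin := by
  have hcyl : ∀ s ∈ cylinders, cantorMeasure s = Measure.infinitePi (fun _ => fairCoin) s := by
    rintro _ ⟨X, n, rfl⟩
    rw [cantorMeasure_cylinder, infinitePi_fairCoin_cylinder]
  have : IsFiniteMeasure cantorMeasure := by
    rw [cantorMeasure]; infer_instance
  refine ext_of_generate_finite cylinders generateFrom_cylinders.symm isPiSystem_cylinders hcyl ?_
  rw [← PiNat.cylinder_zero (fun _ => false)]
  exact hcyl _ ⟨_, 0, rfl⟩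

theorem measurePreserving_pair_curry {α : Type*} [MeasurableSpace α] (μ : Measure α)
    [IsProbabilityMeasure μ] :
    MeasurePreserving (fun (B : ℕ → α) (i x : ℕ) => B (Nat.pair i x))
      (Measure.infinitePi fun _ => μ)
      (Measure.infinitePi fun _ => Measure.infinitePi fun _ => μ) := by
  have h1 : MeasurePreserving (MeasurableEquiv.piCongrLeft (fun _ => α) Nat.pairEquiv.symm)
      (Measure.infinitePi fun _ => μ) (Measure.infinitePi fun _ : ℕ × ℕ => μ) :=
    ⟨by fun_prop, Measure.infinitePi_map_piCongrLeft (fun _ : ℕ × ℕ => μ) Nat.pairEquiv.symm⟩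
  have h2 : MeasurePreserving (MeasurableEquiv.curry ℕ ℕ α) (Measure.infinitePi fun _ : ℕ × ℕ => μ)
      (Measure.infinitePi fun _ => Measure.infinitePi fun _ => μ) :=
    ⟨by fun_prop, Measure.infinitePi_map_curry (fun (_ _ : ℕ) => μ)⟩
  convert h2.comp h1 using 1
  ext B i x
  simp [MeasurableEquiv.piCongrLeft, Equiv.piCongrLeft_apply_eq_cast]

instance : IsProbabilityMeasure cantorMeasure := cantorMeasure_eq_infinitePi ▸ inferInstance

theorem cantorMeasure_setOf_forall_column_mem {P : ℕ → Set (ℕ → Bool)}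
    (hP : ∀ i, MeasurableSet (P i)) :
    cantorMeasure {B | ∀ i, (fun x => B (Nat.pair i x)) ∈ P i} = ∏' i, cantorMeasure (P i) := by
  have hpre : {B : ℕ → Bool | ∀ i, (fun x => B (Nat.pair i x)) ∈ P i} =
      (fun B i x => B (Nat.pair i x)) ⁻¹' Set.univ.pi P := by
    ext B; simp
  rw [hpre, cantorMeasure_eq_infinitePi,
    (measurePreserving_pair_curry fairCoin).measure_preimage
      (MeasurableSet.univ_pi hP).nullMeasurableSet, Measure.infinitePi_pi_univ _ hP]

theorem strictMono_pair (i : ℕ) : StrictMono (Nat.pair i) := fun _ _ => Nat.pair_lt_pair_right i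

theorem filter_range_unpair_fst_eq {i n c : ℕ} (hc : ∀ y, y < c ↔ Nat.pair i y < n) :
    (List.range n).filter (fun p => p.unpair.1 = i) = (List.range c).map (Nat.pair i) := by
  refine List.Pairwise.eq_of_mem_iff (r := (· < ·)) (List.pairwise_lt_range.filter _)
    (List.pairwise_map.2 (List.pairwise_lt_range.imp (strictMono_pair i).imp)) fun p => ?_
  simp only [List.mem_filter, List.mem_range, decide_eq_true_eq, List.mem_map, hc]
  constructor
  · rintro ⟨hp, rfl⟩
    exact ⟨p.unpair.2, by rwa [Nat.pair_unpair], Nat.pair_unpair p⟩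
  · rintro ⟨y, hy, rfl⟩
    exact ⟨hy, by simp⟩

theorem exists_forall_lt_iff_pair_lt (i n : ℕ) : ∃ c, ∀ y, y < c ↔ Nat.pair i y < n := by
  classical
  have hex : ∃ c, n ≤ Nat.pair i c := ⟨n, Nat.right_le_pair i n⟩
  refine ⟨Nat.find hex, fun y => ?_⟩
  simp only [Nat.lt_find_iff, not_le]
  exact ⟨fun h => h y le_rfl, fun h m hm =>
    lt_of_le_of_lt ((strictMono_pair i).monotone hm) h⟩

theorem colPrefix_map_range {i n c : ℕ} (hc : ∀ y, y < c ↔ Nat.pair i y < n) (B : ℕ → Bool) :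
    colPrefix i ((List.range n).map B) = (List.range c).map fun y => B (Nat.pair i y) := by
  rw [colPrefix, List.length_map, List.length_range, filter_range_unpair_fst_eq hc, List.map_map]
  refine List.map_congr_left fun y hy => ?_
  have hy : Nat.pair i y < n := (hc y).1 (List.mem_range.1 hy)
  simp [hy]

theorem pathSet_interleaveTree (T : ℕ → Set (List Bool)) :
    pathSet (interleaveTree T) = {B | ∀ i, (fun x => B (Nat.pair i x)) ∈ pathSet (T i)} := by
  ext B
  constructor
  · intro hB i x
    have hx : ∀ y, y < x ↔ Nat.pair i y < Nat.pair i x := fun y =>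
      (strictMono_pair i).lt_iff_lt.symm
    simpa [colPrefix_map_range hx] using hB (Nat.pair i x) i
  · intro hB n i
    obtain ⟨c, hc⟩ := exists_forall_lt_iff_pair_lt i n
    rw [colPrefix_map_range hc]
    exact hB i c

theorem measurableSet_pathSet (T : Set (List Bool)) : MeasurableSet (pathSet T) := by
  rw [pathSet, Set.ofPred_forall]
  refine .iInter fun n => generateFrom_cylinders ▸ measurableSet_generateFrom_cylinders
    (n := n) fun X hX Y hY => ?_
  have hXY : (List.range n).map Y = (List.range n).map X :=
    List.map_congr_left fun k hk => PiNat.mem_cylinder_iff.1 hY k (List.mem_range.1 hk)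
  rwa [Set.mem_ofPred_eq, hXY]

theorem stmt9_general (T : ℕ → Set (List Bool))
    (q : ℕ → ENNReal) (r : ENNReal)
    (hTq : ∀ i, q i ≤ cantorMeasure (pathSet (T i)))
    (hqr : r ≤ ∏' i, q i) :
    cantorMeasure (pathSet (interleaveTree T)) = (∏' i, cantorMeasure (pathSet (T i))) ∧
    r ≤ cantorMeasure (pathSet (interleaveTree T)) ∧
    Continuous (fun (B : ℕ → Bool) (i x : ℕ) => B (Nat.pair i x)) ∧
    ∀ B ∈ pathSet (interleaveTree T), ∀ i,
      (fun x => B (Nat.pair i x)) ∈ pathSet (T i) := by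
  have hprod :
      cantorMeasure (pathSet (interleaveTree T)) = ∏' i, cantorMeasure (pathSet (T i)) := by
    rw [pathSet_interleaveTree,
      cantorMeasure_setOf_forall_column_mem fun i => measurableSet_pathSet (T i)]
  refine ⟨hprod, ?_, by fun_prop, fun B hB => by rwa [pathSet_interleaveTree] at hB⟩
  calc r ≤ ∏' i, q i := hqr
    _ ≤ ∏' i, cantorMeasure (pathSet (T i)) :=
      (ENNReal.multipliable_of_le_one fun i => (hTq i).trans prob_le_one).tprod_le_tprod hTq
        (ENNReal.multipliable_of_le_one fun _ => prob_le_one)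
    _ = cantorMeasure (pathSet (interleaveTree T)) := hprod.symm

/-- Let `⟨Tᵢ⟩` be trees with `μ([Tᵢ]) ≥ qᵢ`, where `0 < qᵢ ≤ 1` and `∏ᵢ qᵢ ≥ r > 0`,
and let `S` be the interleaving tree.  Then `μ([S]) = ∏ᵢ μ([Tᵢ]) ≥ r > 0`, and every
path `B` of `S` continuously determines the sequence of its columns, each of which
is a path through the corresponding `Tᵢ`. -/
theorem stmt9 (T : ℕ → Set (List Bool)) (hT : ∀ i, IsTree (T i))
    (q : ℕ → ENNReal) (r : ENNReal)
    (hq0 : ∀ i, 0 < q i) (hq1 : ∀ i, q i ≤ 1)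
    (hTq : ∀ i, q i ≤ cantorMeasure (pathSet (T i)))
    (hr : 0 < r) (hqr : r ≤ ∏' i, q i) :
    cantorMeasure (pathSet (interleaveTree T)) = (∏' i, cantorMeasure (pathSet (T i))) ∧
    r ≤ cantorMeasure (pathSet (interleaveTree T)) ∧
    Continuous (fun (B : ℕ → Bool) (i x : ℕ) => B (Nat.pair i x)) ∧
    ∀ B ∈ pathSet (interleaveTree T), ∀ i,
      (fun x => B (Nat.pair i x)) ∈ pathSet (T i) :=
  stmt9_general T q r hTq hqr
end

section
/- Let n ≥ 1 be odd, let φ be a computable predicate, and let A = {i : ∃x₀∀x₁⋯∃x_{n-1} φ(i,x₀,…,x_{n-1})}. Define fᵢ : [ℕ]^n → Fin 2 by fᵢ(y₀,…,y_{n-1}) = 1 iff ∃x₀<y₀ ∀x₁<y₁ ⋯ ∃x_{n-1}<y_{n-1} φ(i,x₀,…,x_{n-1}). Then for every i and every infinite set H homogeneous for fᵢ, the constant value of fᵢ on [H]^n equals A(i) (1 if i ∈ A, 0 otherwise). -/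
/-- Bounded alternating quantifier block: `altBounded φ acc (b₀ :: … :: b_{n-1})` is
`Q₀ x₀ < b₀, Q₁ x₁ < b₁, …, φ (acc ++ [x₀,…,x_{n-1}])`, where the quantifier at
position `acc.length + j` is `∃` for even positions and `∀` for odd positions. -/
def altBounded (φ : List ℕ → Prop) : List ℕ → List ℕ → Prop
  | acc, [] => φ acc
  | acc, b :: rest =>
      if acc.length % 2 = 0 then ∃ x < b, altBounded φ (acc ++ [x]) rest
      else ∀ x < b, altBounded φ (acc ++ [x]) rest

/-- Unbounded alternating quantifier block of depth `d`, with the same parity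
convention (even positions `∃`, odd positions `∀`). -/
def altUnbounded (φ : List ℕ → Prop) : List ℕ → ℕ → Prop
  | acc, 0 => φ acc
  | acc, d + 1 =>
      if acc.length % 2 = 0 then ∃ x, altUnbounded φ (acc ++ [x]) d
      else ∀ x, altUnbounded φ (acc ++ [x]) d

private lemma le_foldr_max (l : List ℕ) (m : ℕ) :
    m ≤ l.foldr max m ∧ ∀ x ∈ l, x ≤ l.foldr max m := by
  induction l with
  | nil => simp
  | cons a t ih =>
    refine ⟨le_trans ih.1 (le_max_right _ _), ?_⟩
    intro x hx
    rcases List.mem_cons.1 hx with rfl | hx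
    · exact le_max_left _ _
    · exact le_trans (ih.2 x hx) (le_max_right _ _)

private lemma exists_bounds_pos (φ : List ℕ → Prop) (H : Set ℕ) (hH : H.Infinite) :
    ∀ d (L : List (List ℕ)) (ℓ : ℕ), (∀ acc ∈ L, acc.length = ℓ) →
    (∀ acc ∈ L, altUnbounded φ acc d) → ∀ m,
    ∃ ys : List ℕ, ys.length = d ∧ ys.Pairwise (· < ·) ∧ (∀ y ∈ ys, y ∈ H ∧ m < y) ∧
      ∀ acc ∈ L, altBounded φ acc ys := by
  intro d
  induction d with
  | zero =>
    intro L ℓ hlen hU m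
    exact ⟨[], rfl, .nil, by simp, fun acc h => by
      have := hU acc h
      simpa [altUnbounded, altBounded] using this⟩
  | succ d ih =>
    intro L ℓ hlen hU m
    by_cases hℓ : ℓ % 2 = 0
    · -- existential position
      classical
      set g : List ℕ → ℕ := fun acc =>
        if h : ∃ x, altUnbounded φ (acc ++ [x]) d then h.choose else 0 with hgdef
      have hg : ∀ acc ∈ L, altUnbounded φ (acc ++ [g acc]) d := by
        intro acc ha
        have h := hU acc ha
        rw [altUnbounded, hlen acc ha, if_pos hℓ] at h
        simp only [hgdef, dif_pos h]
        exact h.choose_spec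
      obtain ⟨y₀, hy₀H, hy₀⟩ := hH.exists_gt ((m :: L.map g).foldr max 0)
      have hy₀m : m < y₀ :=
        lt_of_le_of_lt ((le_foldr_max _ _).2 m (by simp)) hy₀
      have hy₀g : ∀ acc ∈ L, g acc < y₀ := fun acc ha =>
        lt_of_le_of_lt ((le_foldr_max _ _).2 (g acc)
          (by simp [List.mem_map]; exact Or.inr ⟨acc, ha, rfl⟩)) hy₀
      obtain ⟨ys, hyslen, hyspair, hysmem, hysB⟩ :=
        ih (L.map fun acc => acc ++ [g acc]) (ℓ + 1)
          (by intro a ha; obtain ⟨acc, hacc, rfl⟩ := List.mem_map.1 ha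
              simp [hlen acc hacc])
          (by intro a ha; obtain ⟨acc, hacc, rfl⟩ := List.mem_map.1 ha
              exact hg acc hacc) y₀
      refine ⟨y₀ :: ys, by simp [hyslen], ?_, ?_, ?_⟩
      · exact List.pairwise_cons.2 ⟨fun y hy => (hysmem y hy).2, hyspair⟩
      · intro y hy
        rcases List.mem_cons.1 hy with rfl | hy
        · exact ⟨hy₀H, hy₀m⟩
        · exact ⟨(hysmem y hy).1, lt_trans hy₀m (hysmem y hy).2⟩
      · intro acc ha
        rw [altBounded, hlen acc ha, if_pos hℓ]
        exact ⟨g acc, hy₀g acc ha, hysB _ (List.mem_map.2 ⟨acc, ha, rfl⟩)⟩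
    · -- universal position
      obtain ⟨y₀, hy₀H, hy₀m⟩ := hH.exists_gt m
      obtain ⟨ys, hyslen, hyspair, hysmem, hysB⟩ :=
        ih (L.flatMap fun acc => (List.range y₀).map fun x => acc ++ [x]) (ℓ + 1)
          (by intro a ha
              obtain ⟨acc, hacc, ha2⟩ := List.mem_flatMap.1 ha
              obtain ⟨x, _, rfl⟩ := List.mem_map.1 ha2
              simp [hlen acc hacc])
          (by intro a ha
              obtain ⟨acc, hacc, ha2⟩ := List.mem_flatMap.1 ha
              obtain ⟨x, _, rfl⟩ := List.mem_map.1 ha2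
              have h := hU acc hacc
              rw [altUnbounded, hlen acc hacc, if_neg hℓ] at h
              exact h x) y₀
      refine ⟨y₀ :: ys, by simp [hyslen], ?_, ?_, ?_⟩
      · exact List.pairwise_cons.2 ⟨fun y hy => (hysmem y hy).2, hyspair⟩
      · intro y hy
        rcases List.mem_cons.1 hy with rfl | hy
        · exact ⟨hy₀H, hy₀m⟩
        · exact ⟨(hysmem y hy).1, lt_trans hy₀m (hysmem y hy).2⟩
      · intro acc ha
        rw [altBounded, hlen acc ha, if_neg hℓ]
        intro x hx
        exact hysB _ (List.mem_flatMap.2 ⟨acc, ha,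
          List.mem_map.2 ⟨x, List.mem_range.2 hx, rfl⟩⟩)

private lemma exists_bounds_neg (φ : List ℕ → Prop) (H : Set ℕ) (hH : H.Infinite) :
    ∀ d (L : List (List ℕ)) (ℓ : ℕ), (∀ acc ∈ L, acc.length = ℓ) →
    (∀ acc ∈ L, ¬ altUnbounded φ acc d) → ∀ m,
    ∃ ys : List ℕ, ys.length = d ∧ ys.Pairwise (· < ·) ∧ (∀ y ∈ ys, y ∈ H ∧ m < y) ∧
      ∀ acc ∈ L, ¬ altBounded φ acc ys := by
  intro d
  induction d with
  | zero =>
    intro L ℓ hlen hU m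
    exact ⟨[], rfl, .nil, by simp, fun acc h => by
      have := hU acc h
      simpa [altUnbounded, altBounded] using this⟩
  | succ d ih =>
    intro L ℓ hlen hU m
    by_cases hℓ : ℓ % 2 = 0
    · -- existential position; negation is universal
      obtain ⟨y₀, hy₀H, hy₀m⟩ := hH.exists_gt m
      obtain ⟨ys, hyslen, hyspair, hysmem, hysB⟩ :=
        ih (L.flatMap fun acc => (List.range y₀).map fun x => acc ++ [x]) (ℓ + 1)
          (by intro a ha
              obtain ⟨acc, hacc, ha2⟩ := List.mem_flatMap.1 ha
              obtain ⟨x, _, rfl⟩ := List.mem_map.1 ha2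
              simp [hlen acc hacc])
          (by intro a ha
              obtain ⟨acc, hacc, ha2⟩ := List.mem_flatMap.1 ha
              obtain ⟨x, _, rfl⟩ := List.mem_map.1 ha2
              have h := hU acc hacc
              rw [altUnbounded, hlen acc hacc, if_pos hℓ] at h
              push_neg at h
              exact h x) y₀
      refine ⟨y₀ :: ys, by simp [hyslen], ?_, ?_, ?_⟩
      · exact List.pairwise_cons.2 ⟨fun y hy => (hysmem y hy).2, hyspair⟩
      · intro y hy
        rcases List.mem_cons.1 hy with rfl | hy
        · exact ⟨hy₀H, hy₀m⟩
        · exact ⟨(hysmem y hy).1, lt_trans hy₀m (hysmem y hy).2⟩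
      · intro acc ha
        rw [altBounded, hlen acc ha, if_pos hℓ]
        rintro ⟨x, hx, hB⟩
        exact hysB _ (List.mem_flatMap.2 ⟨acc, ha,
          List.mem_map.2 ⟨x, List.mem_range.2 hx, rfl⟩⟩) hB
    · -- universal position; negation is existential
      classical
      set g : List ℕ → ℕ := fun acc =>
        if h : ∃ x, ¬ altUnbounded φ (acc ++ [x]) d then h.choose else 0 with hgdef
      have hg : ∀ acc ∈ L, ¬ altUnbounded φ (acc ++ [g acc]) d := by
        intro acc ha
        have h := hU acc ha
        rw [altUnbounded, hlen acc ha, if_neg hℓ] at h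
        push_neg at h
        simp only [hgdef, dif_pos h]
        exact h.choose_spec
      obtain ⟨y₀, hy₀H, hy₀⟩ := hH.exists_gt ((m :: L.map g).foldr max 0)
      have hy₀m : m < y₀ :=
        lt_of_le_of_lt ((le_foldr_max _ _).2 m (by simp)) hy₀
      have hy₀g : ∀ acc ∈ L, g acc < y₀ := fun acc ha =>
        lt_of_le_of_lt ((le_foldr_max _ _).2 (g acc)
          (by simp [List.mem_map]; exact Or.inr ⟨acc, ha, rfl⟩)) hy₀
      obtain ⟨ys, hyslen, hyspair, hysmem, hysB⟩ :=
        ih (L.map fun acc => acc ++ [g acc]) (ℓ + 1)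
          (by intro a ha; obtain ⟨acc, hacc, rfl⟩ := List.mem_map.1 ha
              simp [hlen acc hacc])
          (by intro a ha; obtain ⟨acc, hacc, rfl⟩ := List.mem_map.1 ha
              exact hg acc hacc) y₀
      refine ⟨y₀ :: ys, by simp [hyslen], ?_, ?_, ?_⟩
      · exact List.pairwise_cons.2 ⟨fun y hy => (hysmem y hy).2, hyspair⟩
      · intro y hy
        rcases List.mem_cons.1 hy with rfl | hy
        · exact ⟨hy₀H, hy₀m⟩
        · exact ⟨(hysmem y hy).1, lt_trans hy₀m (hysmem y hy).2⟩
      · intro acc ha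
        rw [altBounded, hlen acc ha, if_neg hℓ]
        intro hB
        exact hysB _ (List.mem_map.2 ⟨acc, ha, rfl⟩) (hB (g acc) (hy₀g acc ha))

/-- Let `n ≥ 1` be odd, `φ` computable, and `A = {i : ∃x₀∀x₁⋯∃x_{n-1} φ(i,x₀,…,x_{n-1})}`.
Define `fᵢ : [ℕ]^n → Fin 2` by `fᵢ(y₀,…,y_{n-1}) = 1` iff
`∃x₀<y₀ ∀x₁<y₁ ⋯ ∃x_{n-1}<y_{n-1} φ(i,x₀,…,x_{n-1})` (bounds in increasing order).
Then for every `i` and every infinite `H` homogeneous for `fᵢ`, the constant value of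
`fᵢ` on `[H]^n` equals `A(i)`. -/
theorem stmt11 (n : ℕ) (hn : 1 ≤ n) (hodd : Odd n)
    (φ : ℕ → List ℕ → Bool) (hφ : Computable₂ φ)
    (A : Set ℕ) (hA : ∀ i, i ∈ A ↔ altUnbounded (fun xs => φ i xs = true) [] n)
    (f : ℕ → Finset ℕ → Fin 2)
    (hf : ∀ i s, s.card = n →
      (f i s = 1 ↔ altBounded (fun xs => φ i xs = true) [] (s.sort (· ≤ ·))))
    (i : ℕ) (H : Set ℕ) (hH : H.Infinite)
    (c : Fin 2) (hhom : ∀ s : Finset ℕ, ↑s ⊆ H → s.card = n → f i s = c) :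
    (c = 1 ↔ i ∈ A) := by
  classical
  by_cases hiA : i ∈ A
  · obtain ⟨ys, hlen, hpair, hmem, hB⟩ :=
      exists_bounds_pos (fun xs => φ i xs = true) H hH n [[]] 0 (by simp)
        (by simpa using (hA i).1 hiA) 0
    have hnd : ys.Nodup := hpair.imp ne_of_lt
    have hcard : ys.toFinset.card = n := by
      rw [List.toFinset_card_of_nodup hnd, hlen]
    have hsort : ys.toFinset.sort (· ≤ ·) = ys :=
      (List.toFinset_sort _ hnd).2 (hpair.imp le_of_lt)
    have hsub : ↑ys.toFinset ⊆ H := fun y hy => (hmem y (by simpa using hy)).1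
    have h1 : f i ys.toFinset = 1 := by
      rw [hf i _ hcard, hsort]
      exact hB [] (by simp)
    have hc : c = 1 := (hhom _ hsub hcard) ▸ h1
    simp [hc, hiA]
  · obtain ⟨ys, hlen, hpair, hmem, hB⟩ :=
      exists_bounds_neg (fun xs => φ i xs = true) H hH n [[]] 0 (by simp)
        (by simpa using fun h => hiA ((hA i).2 h)) 0
    have hnd : ys.Nodup := hpair.imp ne_of_lt
    have hcard : ys.toFinset.card = n := by
      rw [List.toFinset_card_of_nodup hnd, hlen]
    have hsort : ys.toFinset.sort (· ≤ ·) = ys :=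
      (List.toFinset_sort _ hnd).2 (hpair.imp le_of_lt)
    have hsub : ↑ys.toFinset ⊆ H := fun y hy => (hmem y (by simpa using hy)).1
    have h1 : f i ys.toFinset ≠ 1 := fun h =>
      hB [] (by simp) (hsort ▸ (hf i _ hcard).1 h)
    have hc : c ≠ 1 := (hhom _ hsub hcard) ▸ h1
    simp [hc, hiA]
end

section
/- For all positive rationals p < q < 1 there is no Weihrauch reduction of p-WWKL to q-WWKL: there do not exist Turing functionals Φ, Ψ such that for every tree T ⊆ 2^{<ω} with |T ∩ 2^n| ≥ p·2^n for all n, Φ(T) is a tree with |Φ(T) ∩ 2^n| ≥ q·2^n for all n, and for every infinite path X of Φ(T), Ψ(T, X) is an infinite path of T. -/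
/-!
Suppose `Φ, Ψ` reduce `p`-WWKL to `q`-WWKL and fix `n` with `(q - p) 2ⁿ > 1`. The `p`-instances
together with the paths of their images under `Φ` form a compact subset of Cantor space, and `Φ`,
`Ψ` are continuous, so there is a single use `v` within which `Ψ` commits to the first `n` bits of
its answer on every such pair. If an instance agrees with the full binary tree on all codes
below `v`, these bits are therefore predicted by a string `w` of length `v` alone. Seal the
`⌊(1 - p) 2ⁿ⌋` strings `σ` of length `n` that are predicted most often, i.e. delete all long
extensions of them: the result is still a `p`-instance that agrees with the full tree below `v`.
Every path of its image under `Φ` begins with a `w` whose prediction is not sealed, since `Ψ`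
must produce a path of the sealed tree. As the sealed `σ` are the most frequent predictions, these
`w` form at most a `1 - ⌊(1 - p) 2ⁿ⌋ / 2ⁿ < q` fraction of the strings of length `v`. But the
paths of a `q`-dense tree pass through at least a `q`-fraction of each level.
-/

/-- A (total-style) Turing functional, given by a computable, monotone
approximation function mapping finite oracle prefixes to output values. -/
structure TuringFunctional where
  approx : List ℕ → ℕ → Option ℕ
  computable : Computable₂ approx
  mono : ∀ {l₁ l₂ : List ℕ} {n a : ℕ}, l₁ <+: l₂ → approx l₁ n = some a → approx l₂ n = some a

/-- `Φ.evalsTo X Y` means the functional `Φ` with oracle `X` converges everywhere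
and computes the total function `Y`. -/
def TuringFunctional.evalsTo (Φ : TuringFunctional) (X Y : ℕ → ℕ) : Prop :=
  ∀ n, ∃ m, Φ.approx ((List.range m).map X) n = some (Y n)

/-- Effective join of two oracles. -/
def join2 (X Y : ℕ → ℕ) : ℕ → ℕ := fun n => if n % 2 = 0 then X (n / 2) else Y (n / 2)

/-- Code a boolean-valued function (a set) as an oracle. -/
def bc (X : ℕ → Bool) : ℕ → ℕ := fun n => Bool.toNat (X n)

/-- Effective join of a countable sequence of sets into a single oracle. -/
def seqJoin (A : ℕ → ℕ → Bool) : ℕ → ℕ := fun n => Bool.toNat (A n.unpair.1 n.unpair.2)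

/-- Trees as boolean predicates on finite binary strings, closed under prefixes. -/
def IsTreeB (T : List Bool → Bool) : Prop :=
  ∀ l, T l = true → ∀ l', l' <+: l → T l' = true

/-- The number of strings of length `n` in the tree `T`. -/
def levelCard (T : List Bool → Bool) (n : ℕ) : ℕ :=
  (Finset.univ.filter fun v : Fin n → Bool => T (List.ofFn v) = true).card

/-- The code of a tree as an oracle: its characteristic function on codes of strings. -/
def treeCode (T : List Bool → Bool) : ℕ → ℕ := fun e =>
  match (Encodable.decode (α := List Bool) e) with
  | some l => Bool.toNat (T l)
  | none => 0

/-- `X` is an infinite path through `T`. -/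
def pathB (T : List Bool → Bool) (X : ℕ → Bool) : Prop :=
  ∀ n, T ((List.range n).map X) = true

open Filter Topology

def IsDenseTree (r : ℚ) (T : List Bool → Bool) : Prop :=
  IsTreeB T ∧ ∀ n, r * 2 ^ n ≤ (levelCard T n : ℚ)

def IsWWKLReduction (p q : ℚ) (Φ Ψ : TuringFunctional) : Prop :=
  ∀ T, IsDenseTree p T → ∃ T', IsDenseTree q T' ∧ Φ.evalsTo (treeCode T) (treeCode T') ∧
    ∀ X, pathB T' X → ∃ Y, Ψ.evalsTo (join2 (treeCode T) (bc X)) (bc Y) ∧ pathB T Y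

theorem map_range_prefix {α : Type*} (f : ℕ → α) {a b : ℕ} (h : a ≤ b) :
    (List.range a).map f <+: (List.range b).map f := by
  have : List.range a = (List.range b).take a := by simp [List.take_range, h]
  rw [this, List.map_take]
  exact List.take_prefix _ _

theorem ofFn_eq_map_range (X : ℕ → Bool) (n : ℕ) :
    List.ofFn (fun i : Fin n => X i) = (List.range n).map X := by
  apply List.ext_getElem <;> simp

def padFalse {n : ℕ} (w : Fin n → Bool) (i : ℕ) : Bool :=
  if h : i < n then w ⟨i, h⟩ else false

theorem padFalse_apply {n : ℕ} (w : Fin n → Bool) (i : Fin n) : padFalse w i = w i := by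
  simp [padFalse]

theorem map_range_padFalse {n : ℕ} (w : Fin n → Bool) :
    (List.range n).map (padFalse w) = List.ofFn w := by
  refine List.ext_getElem (by simp) fun i hi _ => ?_
  simpa using padFalse_apply w ⟨i, by simpa using hi⟩

theorem length_le_of_decode_eq_some {α : Type*} [Encodable α] :
    ∀ {e : ℕ} {l : List α}, Encodable.decode e = some l → l.length ≤ e
  | 0, l, h => by simp_all
  | e + 1, l, h => by
    simp only [Encodable.decode_list_succ, seq_eq_bind_map, Option.map_eq_map,
      Option.bind_eq_bind, Option.bind_eq_some_iff, Option.map_eq_some_iff,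
      exists_exists_and_eq_and] at h
    obtain ⟨a, -, l', hl', rfl⟩ := h
    have := length_le_of_decode_eq_some hl'
    have := Nat.unpair_right_le e
    simp only [List.length_cons]
    omega

theorem treeCode_encode (T : List Bool → Bool) (l : List Bool) :
    treeCode T (Encodable.encode l) = (T l).toNat := by
  simp [treeCode]

theorem map_range_join2_congr {m : ℕ} {o₁ o₂ o₁' o₂' : ℕ → ℕ}
    (h₁ : ∀ i < m, o₁ i = o₁' i) (h₂ : ∀ i < m, o₂ i = o₂' i) :
    (List.range m).map (join2 o₁ o₂) = (List.range m).map (join2 o₁' o₂') :=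
  List.map_congr_left fun i hi => by
    have : i / 2 < m := lt_of_le_of_lt (Nat.div_le_self i 2) (List.mem_range.1 hi)
    simp only [join2, h₁ _ this, h₂ _ this]

section Counting

variable {α : Type*}

theorem ofFn_castAdd_prefix {n m : ℕ} (u : Fin (n + m) → α) :
    List.ofFn (fun i => u (Fin.castAdd m i)) <+: List.ofFn u := by
  rw [List.ofFn_add (f := u)]
  exact List.prefix_append _ _

theorem eq_castAdd_of_ofFn_prefix {n m : ℕ} {σ : Fin n → α} {u : Fin (n + m) → α}
    (h : List.ofFn σ <+: List.ofFn u) : σ = fun i => u (Fin.castAdd m i) :=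
  List.ofFn_injective <|
    (List.prefix_of_prefix_length_le h (ofFn_castAdd_prefix u) (by simp)).eq_of_length (by simp)

theorem card_le_card_mul_pow_of_castAdd_mem [Fintype α] {L m : ℕ}
    {s : Finset (Fin (L + m) → α)} {E : Finset (Fin L → α)}
    (hs : ∀ u ∈ s, (fun i => u (Fin.castAdd m i)) ∈ E) :
    s.card ≤ E.card * Fintype.card α ^ m := by
  calc s.card ≤ (E ×ˢ (Finset.univ : Finset (Fin m → α))).card := by
        refine Finset.card_le_card_of_injOn
          (fun u => (fun i => u (Fin.castAdd m i), fun i => u (Fin.natAdd L i)))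
          (fun u hu => by simpa using hs u hu) fun u _ u' _ huu' => ?_
        rw [← Fin.append_castAdd_natAdd (f := u), ← Fin.append_castAdd_natAdd (f := u')]
        simp_all [Prod.ext_iff]
    _ = E.card * Fintype.card α ^ m := by simp [Finset.card_product]

theorem exists_subset_card_eq_forall_le [DecidableEq α] (f : α → ℕ) :
    ∀ {k : ℕ} {s : Finset α}, k ≤ s.card →
      ∃ K ⊆ s, K.card = k ∧ ∀ a ∈ s \ K, ∀ b ∈ K, f a ≤ f b
  | 0, _, _ => ⟨∅, Finset.empty_subset _, rfl, by simp⟩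
  | k + 1, s, hk => by
    obtain ⟨b₀, hb₀, hmax⟩ := Finset.exists_max_image s f (Finset.card_pos.1 (by omega))
    obtain ⟨K, hKs, hK, hKle⟩ := exists_subset_card_eq_forall_le f (k := k) (s := s.erase b₀)
      (by rw [Finset.card_erase_of_mem hb₀]; omega)
    have hb₀K : b₀ ∉ K := fun h => Finset.notMem_erase b₀ s (hKs h)
    refine ⟨insert b₀ K, Finset.insert_subset hb₀ (hKs.trans (Finset.erase_subset _ _)),
      by rw [Finset.card_insert_of_notMem hb₀K, hK], fun a ha b hb => ?_⟩
    simp only [Finset.mem_sdiff, Finset.mem_insert, not_or] at ha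
    rcases Finset.mem_insert.1 hb with rfl | hb
    · exact hmax a ha.1
    · exact hKle a (by simp [ha.1, ha.2.1, ha.2.2]) b hb

/-- Taking for `K` the `k` values with the largest fibres, the complement of `K` carries at most
its proportional share of `α`. -/
theorem exists_card_filter_notMem_mul_le [Fintype α] {β : Type*} [Fintype β] [DecidableEq β]
    (c : α → β) {k : ℕ} (hk : k ≤ Fintype.card β) :
    ∃ K : Finset β, K.card = k ∧
      (Finset.univ.filter fun a => c a ∉ K).card * Fintype.card β ≤
        (Fintype.card β - k) * Fintype.card α := by
  set fib : β → ℕ := fun b => (Finset.univ.filter fun a => c a = b).card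
  obtain ⟨K, -, hK, hle⟩ := exists_subset_card_eq_forall_le fib (s := Finset.univ) (by simpa)
  refine ⟨K, hK, ?_⟩
  set out := Finset.univ \ K
  have hout : (Finset.univ.filter fun a => c a ∉ K).card = ∑ b ∈ out, fib b := by
    rw [Finset.sum_card_fiberwise_eq_card_filter]
    simp [out]
  have htotal : ∑ b ∈ out, fib b + ∑ b ∈ K, fib b = Fintype.card α := by
    rw [Finset.sum_sdiff (Finset.subset_univ K), Finset.sum_card_fiberwise_eq_card_filter]
    simp
  have hcard : out.card + k = Fintype.card β := by
    rw [Finset.card_sdiff_of_subset (Finset.subset_univ K), hK, Finset.card_univ]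
    omega
  have hexchange : (∑ b ∈ out, fib b) * k ≤ out.card * ∑ b ∈ K, fib b :=
    calc (∑ b ∈ out, fib b) * k = ∑ b ∈ out, K.card • fib b := by
          rw [Finset.sum_mul, hK]; simp [mul_comm]
      _ ≤ ∑ _b ∈ out, ∑ b' ∈ K, fib b' :=
          Finset.sum_le_sum fun b hb => Finset.card_nsmul_le_sum K fib _ (hle b hb)
      _ = out.card * ∑ b ∈ K, fib b := by simp
  rw [hout, ← htotal, ← hcard, Nat.add_sub_cancel]
  nlinarith

end Counting

theorem exists_tendsto_hyperfilter {X : Type*} [TopologicalSpace X] [CompactSpace X]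
    (f : ℕ → X) : ∃ x, Tendsto f (hyperfilter ℕ) (𝓝 x) := by
  obtain ⟨x, -, hx⟩ := isCompact_univ.ultrafilter_le_nhds (.map f (hyperfilter ℕ)) (by simp)
  exact ⟨x, hx⟩

theorem eventually_ge_hyperfilter (m : ℕ) : ∀ᶠ i in hyperfilter ℕ, m ≤ i :=
  Nat.hyperfilter_le_atTop (eventually_ge_atTop m)

section DiscreteLimits

variable {ι α β : Type*} [TopologicalSpace β] [DiscreteTopology β] {l : Filter ι}
  {f : ι → α → β} {x : α → β}

theorem Filter.Tendsto.eventually_apply_eq (h : Tendsto f l (𝓝 x)) (a : α) :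
    ∀ᶠ i in l, f i a = x a := by
  simpa [nhds_discrete] using tendsto_pi_nhds.1 h a

theorem Filter.Tendsto.eventually_forall_mem_eq (h : Tendsto f l (𝓝 x)) (s : Finset α) :
    ∀ᶠ i in l, ∀ a ∈ s, f i a = x a :=
  (eventually_all_finset s).2 fun a _ => h.eventually_apply_eq a

theorem Filter.Tendsto.eventually_map_range_eq {o : ι → ℕ → β} {o₀ : ℕ → β}
    (h : Tendsto o l (𝓝 o₀)) (m : ℕ) :
    ∀ᶠ i in l, (List.range m).map (o i) = (List.range m).map o₀ :=
  (h.eventually_forall_mem_eq (Finset.range m)).mono fun _ hi =>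
    List.map_congr_left fun a ha => hi a (by simpa using ha)

end DiscreteLimits

theorem continuous_treeCode : Continuous (treeCode : (List Bool → Bool) → ℕ → ℕ) := by
  refine continuous_pi fun e => ?_
  unfold treeCode
  cases Encodable.decode (α := List Bool) e with
  | none => exact continuous_const
  | some l => exact (continuous_of_discreteTopology (f := Bool.toNat)).comp (continuous_apply l)

theorem continuous_bc : Continuous bc :=
  continuous_pi fun n => continuous_of_discreteTopology.comp (continuous_apply n)

theorem continuous_join2 : Continuous fun o : (ℕ → ℕ) × (ℕ → ℕ) => join2 o.1 o.2 := by
  refine continuous_pi fun n => ?_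
  unfold join2
  split_ifs
  · exact (continuous_apply _).comp continuous_fst
  · exact (continuous_apply _).comp continuous_snd

namespace TuringFunctional

theorem eq_of_approx_eq_some {Φ : TuringFunctional} {o Z : ℕ → ℕ} (hΦ : Φ.evalsTo o Z)
    {m k a : ℕ} (h : Φ.approx ((List.range m).map o) k = some a) : a = Z k := by
  obtain ⟨m', hm'⟩ := hΦ k
  rcases le_total m m' with hle | hle
  · simpa [Φ.mono (map_range_prefix o hle) h] using hm'
  · simpa [Φ.mono (map_range_prefix o hle) hm', eq_comm] using h

theorem tendsto_of_evalsTo {ι : Type*} {l : Filter ι} (Φ : TuringFunctional)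
    {o Z : ι → ℕ → ℕ} {o₀ Z₀ : ℕ → ℕ} (ho : Tendsto o l (𝓝 o₀))
    (hZ : ∀ i, Φ.evalsTo (o i) (Z i)) (hZ₀ : Φ.evalsTo o₀ Z₀) :
    Tendsto Z l (𝓝 Z₀) := by
  refine tendsto_pi_nhds.2 fun k => ?_
  rw [nhds_discrete, tendsto_pure]
  obtain ⟨m, hm⟩ := hZ₀ k
  filter_upwards [ho.eventually_map_range_eq m] with i hi
  exact (eq_of_approx_eq_some (hZ i) (hi ▸ hm)).symm

end TuringFunctional

section Limits

variable {ι : Type*} {l : Filter ι} [l.NeBot]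

theorem IsDenseTree.of_tendsto {r : ℚ} {T : ι → List Bool → Bool} {T₀ : List Bool → Bool}
    (hT : ∀ i, IsDenseTree r (T i)) (h : Tendsto T l (𝓝 T₀)) : IsDenseTree r T₀ := by
  refine ⟨fun s hs s' hs' => ?_, fun n => ?_⟩
  · obtain ⟨i, hi⟩ := (h.eventually_forall_mem_eq {s, s'}).exists
    simp only [Finset.mem_insert, Finset.mem_singleton, forall_eq_or_imp, forall_eq] at hi
    rw [← hi.2]
    exact (hT i).1 s (hi.1 ▸ hs) s' hs'
  · obtain ⟨i, hi⟩ := (h.eventually_forall_mem_eq (Finset.univ.image List.ofFn)).exists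
    have : levelCard T₀ n = levelCard (T i) n := by
      unfold levelCard
      congr 1
      exact Finset.filter_congr fun u _ => by
        rw [hi _ (Finset.mem_image_of_mem _ (Finset.mem_univ u))]
    exact this ▸ (hT i).2 n

theorem pathB_of_tendsto {T : ι → List Bool → Bool} {X : ι → ℕ → Bool}
    {T₀ : List Bool → Bool} {X₀ : ℕ → Bool}
    (hT : Tendsto (fun i => treeCode (T i)) l (𝓝 (treeCode T₀))) (hX : Tendsto X l (𝓝 X₀))
    (h : ∀ i, pathB (T i) (X i)) : pathB T₀ X₀ := by
  intro N
  obtain ⟨i, hTi, hXi⟩ :=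
    ((hT.eventually_apply_eq (Encodable.encode ((List.range N).map X₀))).and
      (hX.eventually_map_range_eq N)).exists
  have hpath := h i N
  rw [hXi] at hpath
  rw [treeCode_encode, treeCode_encode, hpath] at hTi
  cases h₀ : T₀ ((List.range N).map X₀) <;> simp_all

end Limits

theorem exists_use_bound {p q : ℚ} {Φ Ψ : TuringFunctional} (hred : IsWWKLReduction p q Φ Ψ)
    (k : ℕ) : ∃ m, ∀ T T' X, IsDenseTree p T → Φ.evalsTo (treeCode T) (treeCode T') →
      pathB T' X → (Ψ.approx ((List.range m).map (join2 (treeCode T) (bc X))) k).isSome := by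
  by_contra! h
  choose T T' X hT hΦ hX hfail using h
  obtain ⟨⟨T₀, X₀⟩, hlim⟩ := exists_tendsto_hyperfilter fun m => (T m, X m)
  have hTlim := (continuous_fst.tendsto _).comp hlim
  have hXlim := (continuous_snd.tendsto _).comp hlim
  obtain ⟨T'₀, -, hΦ₀, hΨ₀⟩ := hred T₀ (.of_tendsto hT hTlim)
  have hcode := (continuous_treeCode.tendsto _).comp hTlim
  have hX₀ := pathB_of_tendsto (Φ.tendsto_of_evalsTo hcode hΦ hΦ₀) hXlim hX
  obtain ⟨Y, hY, -⟩ := hΨ₀ X₀ hX₀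
  obtain ⟨u, hu⟩ := hY k
  have horacle : Tendsto (fun m => join2 (treeCode (T m)) (bc (X m))) (hyperfilter ℕ)
      (𝓝 (join2 (treeCode T₀) (bc X₀))) :=
    (continuous_join2.tendsto _).comp (hcode.prodMk_nhds ((continuous_bc.tendsto _).comp hXlim))
  obtain ⟨m, hm, hum⟩ :=
    ((horacle.eventually_map_range_eq u).and (eventually_ge_hyperfilter u)).exists
  have hconv := Ψ.mono (map_range_prefix _ hum) (hm ▸ hu)
  exact hfail m (by simp [hconv])

theorem exists_use_bound_forall_lt {p q : ℚ} {Φ Ψ : TuringFunctional}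
    (hred : IsWWKLReduction p q Φ Ψ) (n : ℕ) :
    ∃ v, ∀ T T' X, IsDenseTree p T → Φ.evalsTo (treeCode T) (treeCode T') → pathB T' X →
      ∀ k < n, (Ψ.approx ((List.range v).map (join2 (treeCode T) (bc X))) k).isSome := by
  choose m hm using exists_use_bound hred
  refine ⟨(Finset.range n).sup m, fun T T' X hT hΦ hX k hk => ?_⟩
  obtain ⟨a, ha⟩ := Option.isSome_iff_exists.1 (hm k T T' X hT hΦ hX)
  rw [Ψ.mono (map_range_prefix _ (Finset.le_sup (Finset.mem_range.2 hk))) ha]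
  rfl

theorem exists_pathB_of_forall_extends {T : List Bool → Bool} (hT : IsTreeB T) {L : ℕ}
    {w : Fin L → Bool}
    (h : ∀ N, ∃ g : ℕ → Bool,
      T ((List.range N).map g) = true ∧ ∀ i : Fin L, g i = w i) :
    ∃ X, pathB T X ∧ ∀ i : Fin L, X i = w i := by
  choose g hgT hgw using h
  obtain ⟨X, hX⟩ := exists_tendsto_hyperfilter g
  refine ⟨X, fun N => ?_, fun i => ?_⟩
  · obtain ⟨M, hM, hNM⟩ :=
      ((hX.eventually_map_range_eq N).and (eventually_ge_hyperfilter N)).exists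
    exact hT _ (hgT M) _ (hM ▸ map_range_prefix (g M) hNM)
  · obtain ⟨M, hM⟩ := (hX.eventually_apply_eq (i : ℕ)).exists
    rw [← hM, hgw]

theorem Antitone.exists_forall_subset {α : Type*} {E : ℕ → Finset α} (hE : Antitone E) :
    ∃ N₀, ∀ N, E N₀ ⊆ E N := by
  have : ∀ a, ∃ N, a ∈ E N → ∀ N', a ∈ E N' := fun a => by
    by_cases h : ∀ N', a ∈ E N'
    · exact ⟨0, fun _ => h⟩
    · obtain ⟨N, hN⟩ := not_forall.1 h
      exact ⟨N, fun h => absurd h hN⟩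
  choose N hN using this
  exact ⟨(E 0).sup N, fun N' a ha =>
    hN a (hE (Finset.le_sup (hE (Nat.zero_le _) ha)) ha) N'⟩

theorem IsDenseTree.exists_large_finset_pathB {q : ℚ} {T : List Bool → Bool}
    (hT : IsDenseTree q T) (L : ℕ) :
    ∃ A : Finset (Fin L → Bool), q * 2 ^ L ≤ A.card ∧
      ∀ w ∈ A, ∃ X, pathB T X ∧ ∀ i : Fin L, X i = w i := by
  classical
  let E : ℕ → Finset (Fin L → Bool) := fun N => Finset.univ.filter fun w =>
    ∃ g : ℕ → Bool, T ((List.range N).map g) = true ∧ ∀ i : Fin L, g i = w i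
  have hanti : Antitone E := fun N₁ N₂ hN w hw => by
    obtain ⟨g, hgT, hgw⟩ := (Finset.mem_filter.1 hw).2
    exact Finset.mem_filter.2 ⟨Finset.mem_univ _, g, hT.1 _ hgT _ (map_range_prefix g hN), hgw⟩
  have hcard : ∀ N, q * 2 ^ L ≤ (E N).card := fun N => by
    have hlevel : levelCard T (L + N) ≤ (E (L + N)).card * 2 ^ N :=
      Fintype.card_bool ▸ card_le_card_mul_pow_of_castAdd_mem fun u hu =>
        Finset.mem_filter.2 ⟨Finset.mem_univ _, padFalse u,
          by simpa [map_range_padFalse] using hu, fun i => padFalse_apply u (Fin.castAdd N i)⟩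
    have hsub : (E (L + N)).card ≤ (E N).card :=
      Finset.card_le_card (hanti (Nat.le_add_left N L))
    have h2N : (0 : ℚ) < 2 ^ N := by positivity
    have := hT.2 (L + N)
    rw [pow_add, ← mul_assoc] at this
    have : q * 2 ^ L * 2 ^ N ≤ (E N).card * 2 ^ N := by
      calc q * 2 ^ L * 2 ^ N ≤ levelCard T (L + N) := this
        _ ≤ ((E (L + N)).card * 2 ^ N : ℕ) := by exact_mod_cast hlevel
        _ ≤ (E N).card * 2 ^ N := by push_cast; gcongr
    exact le_of_mul_le_mul_right this h2N
  obtain ⟨N₀, hN₀⟩ := hanti.exists_forall_subset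
  exact ⟨E N₀, hcard N₀, fun w hw =>
    exists_pathB_of_forall_extends hT.1 fun N => (Finset.mem_filter.1 (hN₀ N hw)).2⟩

def sealTree (D : ℕ) {n : ℕ} (K : Finset (Fin n → Bool)) (l : List Bool) : Bool :=
  decide (l.length < D ∨ ∀ σ ∈ K, ¬ List.ofFn σ <+: l)

section SealTree

variable {D n : ℕ} {K : Finset (Fin n → Bool)}

theorem isTreeB_sealTree : IsTreeB (sealTree D K) := by
  intro l hl l' hl'
  simp only [sealTree, decide_eq_true_eq] at hl ⊢
  rcases hl with hl | hl
  · exact Or.inl (lt_of_le_of_lt hl'.length_le hl)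
  · exact Or.inr fun σ hσ hσl' => hl σ hσ (hσl'.trans hl')

theorem sealTree_of_length_lt {l : List Bool} (hl : l.length < D) : sealTree D K l = true := by
  simp [sealTree, hl]

theorem isDenseTree_sealTree {p : ℚ} (hp : p ≤ 1) (hnD : n ≤ D)
    (hK : (K.card : ℚ) ≤ (1 - p) * 2 ^ n) : IsDenseTree p (sealTree D K) := by
  refine ⟨isTreeB_sealTree, fun j => ?_⟩
  by_cases hj : j < D
  · have : levelCard (sealTree D K) j = 2 ^ j := by
      simp [levelCard, sealTree_of_length_lt, hj]
    rw [this]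
    push_cast
    nlinarith [pow_pos (two_pos : (0 : ℚ) < 2) j]
  obtain ⟨m, rfl⟩ : ∃ m, j = n + m := ⟨j - n, by omega⟩
  have hbad : (Finset.univ.filter fun u : Fin (n + m) → Bool =>
      ¬ sealTree D K (List.ofFn u) = true).card ≤ K.card * 2 ^ m := by
    refine Fintype.card_bool ▸ card_le_card_mul_pow_of_castAdd_mem fun u hu => ?_
    obtain ⟨-, σ, hσ, hσu⟩ : D ≤ n + m ∧ ∃ σ ∈ K, List.ofFn σ <+: List.ofFn u := by
      simpa [sealTree] using (Finset.mem_filter.1 hu).2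
    exact eq_castAdd_of_ofFn_prefix hσu ▸ hσ
  have htotal := Finset.card_filter_add_card_filter_not (s := Finset.univ)
    (fun u : Fin (n + m) → Bool => sealTree D K (List.ofFn u) = true)
  simp only [Finset.card_univ, Fintype.card_fun, Fintype.card_bool, Fintype.card_fin] at htotal
  have : (2 : ℚ) ^ (n + m) ≤ levelCard (sealTree D K) (n + m) + K.card * 2 ^ m := by
    exact_mod_cast htotal ▸ Nat.add_le_add_left hbad _
  rw [pow_add] at this ⊢
  nlinarith [pow_pos (two_pos : (0 : ℚ) < 2) m]

theorem notMem_of_pathB_sealTree (hnD : n ≤ D) {Y : ℕ → Bool} (hY : pathB (sealTree D K) Y) :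
    (fun k : Fin n => Y k) ∉ K := by
  intro hK
  have hYD := hY D
  simp only [sealTree, List.length_map, List.length_range, lt_irrefl, false_or,
    decide_eq_true_eq] at hYD
  refine hYD _ hK ?_
  rw [ofFn_eq_map_range]
  exact map_range_prefix Y hnD

end SealTree

theorem treeCode_sealTree {D n : ℕ} (K : Finset (Fin n → Bool)) {e : ℕ} (he : e < D) :
    treeCode (sealTree D K) e = treeCode (fun _ => true) e := by
  unfold treeCode
  cases hl : Encodable.decode (α := List Bool) e with
  | none => rfl
  | some l => simp [sealTree_of_length_lt (lt_of_le_of_lt (length_le_of_decode_eq_some hl) he)]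

/-- `Ψ`'s first `n` output bits as predicted from the full tree. A sealed tree agrees with the
full tree on every code below the use `v`, so the prediction does not depend on what is sealed. -/
def fullTreeOutput (Ψ : TuringFunctional) (v n : ℕ) (X : ℕ → Bool) (k : Fin n) : Bool :=
  decide (Ψ.approx ((List.range v).map (join2 (treeCode fun _ => true) (bc X))) k = some 1)

theorem fullTreeOutput_congr {Ψ : TuringFunctional} {v n : ℕ} {X X' : ℕ → Bool}
    (h : ∀ i < v, X i = X' i) : fullTreeOutput Ψ v n X = fullTreeOutput Ψ v n X' := by
  unfold fullTreeOutput
  rw [map_range_join2_congr (fun _ _ => rfl) fun i hi =>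
    show bc X i = bc X' i from congrArg Bool.toNat (h i hi)]

theorem fullTreeOutput_eq {Ψ : TuringFunctional} {v n : ℕ} {T : List Bool → Bool}
    {X Y : ℕ → Bool} (hT : ∀ e < v, treeCode T e = treeCode (fun _ => true) e)
    (hdef : ∀ k < n, (Ψ.approx ((List.range v).map (join2 (treeCode T) (bc X))) k).isSome)
    (hY : Ψ.evalsTo (join2 (treeCode T) (bc X)) (bc Y)) :
    fullTreeOutput Ψ v n X = fun k : Fin n => Y k := by
  funext k
  obtain ⟨a, ha⟩ := Option.isSome_iff_exists.1 (hdef k k.2)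
  rw [fullTreeOutput, ← map_range_join2_congr hT fun _ _ => rfl, ha,
    TuringFunctional.eq_of_approx_eq_some hY ha]
  cases hYk : Y k <;> simp [bc, hYk]

theorem le_card_filter_fullTreeOutput_notMem {p q : ℚ} {Φ Ψ : TuringFunctional}
    (hred : IsWWKLReduction p q Φ Ψ) (hp : p ≤ 1) {v n : ℕ}
    (hv : ∀ T T' X, IsDenseTree p T → Φ.evalsTo (treeCode T) (treeCode T') → pathB T' X →
      ∀ k < n, (Ψ.approx ((List.range v).map (join2 (treeCode T) (bc X))) k).isSome)
    {K : Finset (Fin n → Bool)} (hK : (K.card : ℚ) ≤ (1 - p) * 2 ^ n) :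
    q * 2 ^ v ≤ (Finset.univ.filter fun w : Fin v → Bool =>
      fullTreeOutput Ψ v n (padFalse w) ∉ K).card := by
  have hsealed := isDenseTree_sealTree (D := v + n) hp (Nat.le_add_left n v) hK
  obtain ⟨T', hT', hΦ, hΨ⟩ := hred _ hsealed
  obtain ⟨A, hAcard, hApath⟩ := hT'.exists_large_finset_pathB v
  refine hAcard.trans (Nat.cast_le.2 (Finset.card_le_card fun w hw => ?_))
  obtain ⟨X, hX, hXw⟩ := hApath w hw
  obtain ⟨Y, hY, hYpath⟩ := hΨ X hX
  have hout : fullTreeOutput Ψ v n (padFalse w) = fun k : Fin n => Y k := by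
    rw [fullTreeOutput_congr fun i hi =>
        (padFalse_apply w ⟨i, hi⟩).trans (hXw ⟨i, hi⟩).symm,
      fullTreeOutput_eq (fun e he => treeCode_sealTree K (by omega)) (hv _ _ _ hsealed hΦ hX) hY]
  simpa [hout] using notMem_of_pathB_sealTree (Nat.le_add_left n v) hYpath

/-- For positive rationals `p < q < 1`, there is no Weihrauch reduction of `p`-WWKL to
`q`-WWKL: there are no Turing functionals `Φ, Ψ` such that for every tree `T` with
`|T ∩ 2ⁿ| ≥ p·2ⁿ` for all `n`, `Φ(T)` is a tree with `|Φ(T) ∩ 2ⁿ| ≥ q·2ⁿ` for all `n`,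
and `Ψ(T ⊕ X)` is an infinite path of `T` for every infinite path `X` of `Φ(T)`. -/
theorem stmt15 (p q : ℚ) (hp : 0 < p) (hpq : p < q) (hq : q < 1) :
    ¬ ∃ Φ Ψ : TuringFunctional,
      ∀ T : List Bool → Bool, IsTreeB T → (∀ n, p * 2 ^ n ≤ (levelCard T n : ℚ)) →
        ∃ T' : List Bool → Bool, IsTreeB T' ∧
          (∀ n, q * 2 ^ n ≤ (levelCard T' n : ℚ)) ∧
          Φ.evalsTo (treeCode T) (treeCode T') ∧
          ∀ X : ℕ → Bool, pathB T' X →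
            ∃ Y : ℕ → Bool, Ψ.evalsTo (join2 (treeCode T) (bc X)) (bc Y) ∧ pathB T Y := by
  rintro ⟨Φ, Ψ, H⟩
  have hred : IsWWKLReduction p q Φ Ψ := fun T hT => by
    obtain ⟨T', hT'tree, hT'dense, hΦ, hΨ⟩ := H T hT.1 hT.2
    exact ⟨T', ⟨hT'tree, hT'dense⟩, hΦ, hΨ⟩
  obtain ⟨n, hn⟩ : ∃ n : ℕ, 1 < (q - p) * 2 ^ n := by
    obtain ⟨n, hn⟩ := pow_unbounded_of_one_lt (1 / (q - p)) (one_lt_two : (1 : ℚ) < 2)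
    exact ⟨n, by rwa [div_lt_iff₀ (by linarith), mul_comm] at hn⟩
  obtain ⟨v, hv⟩ := exists_use_bound_forall_lt hred n
  set k := ⌊(1 - p) * 2 ^ n⌋₊
  have h2n : (0 : ℚ) < 2 ^ n := by positivity
  have hk : (k : ℚ) ≤ (1 - p) * 2 ^ n := Nat.floor_le (by nlinarith)
  have hk' : (1 - p) * 2 ^ n < k + 1 := Nat.lt_floor_add_one _
  have hkn : k ≤ 2 ^ n := by
    have : (k : ℚ) ≤ 2 ^ n := hk.trans (by nlinarith)
    exact_mod_cast this
  obtain ⟨K, hKcard, hKavg⟩ := exists_card_filter_notMem_mul_le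
    (fun w : Fin v → Bool => fullTreeOutput Ψ v n (padFalse w)) (k := k) (by simpa using hkn)
  have hmany := le_card_filter_fullTreeOutput_notMem hred (hpq.trans hq).le hv (K := K)
    (by rwa [hKcard])
  simp only [Fintype.card_fun, Fintype.card_bool, Fintype.card_fin] at hKavg
  have : q * 2 ^ v * 2 ^ n ≤ (2 ^ n - k) * 2 ^ v := by
    calc q * 2 ^ v * 2 ^ n ≤ _ := mul_le_mul_of_nonneg_right hmany (by positivity)
      _ ≤ ((2 ^ n - k : ℕ) * 2 ^ v : ℕ) := by exact_mod_cast hKavg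
      _ = (2 ^ n - k) * 2 ^ v := by push_cast [Nat.cast_sub hkn]; ring
  nlinarith [pow_pos (two_pos : (0 : ℚ) < 2) v]
end

section
/- For j, k ≥ 2 with j < k, the thin set theorem for j colors is not Weihrauch reducible to the thin set theorem for k colors on ℕ (exponent 1): there are no Turing functionals Φ, Ψ such that for every f : ℕ → Fin j, Φ(f) is a coloring ℕ → Fin k, and for every infinite set T thin for Φ(f), Ψ(f, T) is an infinite set thin for f. -/
/-!
Given `Φ, Ψ`, we build by finite extension a `j`-coloring `f` and an infinite set `T`, thin for
`Φ(f)`, such that `Ψ(f ⊕ T)` is forced to contain an element of every color, so it cannot be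
thin for `f`. Color `i` is forced by padding the current condition with `i` forever and feeding
the reduction an infinite set thin for the resulting `Φ`-coloring: its infinite answer contains
an element beyond the padding, hence of color `i`, enumerated after reading a finite prefix.
The elements put into `T` have `Φ`-colors in a set `D` that gains one color per forced color,
so `|D| ≤ j < k` and `T` stays thin. Finally, either every coloring still gets `Φ`-colors from
`D` arbitrarily far out, and `T` can be made infinite in the limit, or some coloring prefix makes
`Φ` avoid `D` from some point on, and the same forcing, run with `T` cofinite, works directly.
-/

open Set

lemma List.map_range_prefix_of_eqOn {X Y : ℕ → ℕ} {a b : ℕ} (hab : a ≤ b)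
    (h : EqOn X Y (Iio a)) : (List.range a).map X <+: (List.range b).map Y := by
  have : (List.range a).map X = ((List.range b).map Y).take a := by
    rw [← List.map_take, List.take_range, min_eq_left hab]
    exact List.map_congr_left fun x hx => h (List.mem_range.mp hx)
  rw [this]
  exact List.take_prefix _ _

lemma join2_eqOn {f f' : ℕ → ℕ} {T T' : ℕ → Bool} {L : ℕ} (hf : EqOn f f' (Iio L))
    (hT : EqOn T T' (Iio L)) : EqOn (join2 f (bc T)) (join2 f' (bc T')) (Iio (2 * L)) := by
  intro i hi
  have hi : i / 2 < L := by rw [mem_Iio] at hi; omega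
  by_cases h : i % 2 = 0
  · simp only [join2, if_pos h, hf hi]
  · simp only [join2, if_neg h, bc, hT hi]

namespace TuringFunctional

variable (Φ : TuringFunctional) {X Y : ℕ → ℕ}

lemma approx_of_eqOn {a b n v : ℕ} (hab : a ≤ b) (h : EqOn X Y (Iio a))
    (hv : Φ.approx ((List.range a).map X) n = some v) :
    Φ.approx ((List.range b).map Y) n = some v :=
  Φ.mono (List.map_range_prefix_of_eqOn hab h) hv

variable {Φ}

lemma evalsTo.eq_of_approx (h : Φ.evalsTo X Y) {m n v : ℕ}
    (hv : Φ.approx ((List.range m).map X) n = some v) : v = Y n := by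
  obtain ⟨m', hm'⟩ := h n
  rcases le_total m m' with hle | hle
  · simpa using (Φ.approx_of_eqOn hle (eqOn_refl X _) hv).symm.trans hm'
  · simpa using hv.symm.trans (Φ.approx_of_eqOn hle (eqOn_refl X _) hm')

lemma evalsTo.exists_uniform (h : Φ.evalsTo X Y) (L : ℕ) :
    ∃ N, ∀ y < L, Φ.approx ((List.range N).map X) y = some (Y y) := by
  choose M hM using h
  exact ⟨(Finset.range L).sup M, fun y hy =>
    Φ.approx_of_eqOn (Finset.le_sup (Finset.mem_range.mpr hy)) (eqOn_refl X _) (hM y)⟩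

end TuringFunctional

namespace ThinSet

/-- A finite forcing condition: only `f` and `T` below `n` are committed. -/
structure Condition where
  f : ℕ → ℕ
  T : ℕ → Bool
  n : ℕ

namespace Condition

instance : Preorder Condition where
  le p q := p.n ≤ q.n ∧ EqOn p.f q.f (Iio p.n) ∧ EqOn p.T q.T (Iio p.n)
  le_refl p := ⟨le_rfl, eqOn_refl _ _, eqOn_refl _ _⟩
  le_trans p q r hpq hqr := ⟨hpq.1.trans hqr.1, hpq.2.1.trans (hqr.2.1.mono (Iio_subset_Iio hpq.1)),
    hpq.2.2.trans (hqr.2.2.mono (Iio_subset_Iio hpq.1))⟩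

lemma le_mk_piecewise (p : Condition) (f : ℕ → ℕ) (T : ℕ → Bool) {n : ℕ} (hn : p.n ≤ n) :
    p ≤ ⟨(Iio p.n).piecewise p.f f, (Iio p.n).piecewise p.T T, n⟩ :=
  ⟨hn, (piecewise_eqOn _ _ _).symm, (piecewise_eqOn _ _ _).symm⟩

lemma piecewise_const_lt {p : Condition} {i j : ℕ} (hp : ∀ x, p.f x < j) (hi : i < j) (x : ℕ) :
    (Iio p.n).piecewise p.f (fun _ => i) x < j := by
  by_cases hx : x ∈ Iio p.n
  · rw [piecewise_eq_of_mem _ _ _ hx]; exact hp x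
  · rw [piecewise_eq_of_notMem _ _ _ hx]; exact hi

variable (Ψ : TuringFunctional)

def Forces (p : Condition) (x : ℕ) : Prop :=
  Ψ.approx ((List.range (2 * p.n)).map (join2 p.f (bc p.T))) x = some 1

def ForcesColors (j : ℕ) (p : Condition) : Prop :=
  ∀ c < j, ∃ x < p.n, p.f x = c ∧ p.Forces Ψ x

variable {Ψ} {p q : Condition} {x : ℕ}

lemma Forces.mono (hp : p.Forces Ψ x) (hpq : p ≤ q) : q.Forces Ψ x :=
  Ψ.approx_of_eqOn (by have := hpq.1; omega) (join2_eqOn hpq.2.1 hpq.2.2) hp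

lemma Forces.eq_true {Y : ℕ → Bool} (hp : p.Forces Ψ x)
    (hY : Ψ.evalsTo (join2 p.f (bc p.T)) (bc Y)) : Y x = true := by
  have := hY.eq_of_approx hp
  cases hYx : Y x <;> simp_all [bc]

lemma ForcesColors.mono {j : ℕ} (hp : p.ForcesColors Ψ j) (hpq : p ≤ q) : q.ForcesColors Ψ j := by
  intro c hc
  obtain ⟨x, hx, hfx, hxp⟩ := hp c hc
  exact ⟨x, hx.trans_le hpq.1, (hpq.2.1 hx).symm.trans hfx, hxp.mono hpq⟩

end Condition

open Condition

def IsThin (m : ℕ) (g : ℕ → ℕ) (S : ℕ → Bool) : Prop :=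
  ∃ c < m, ∀ x, S x = true → g x ≠ c

def ReducesTS (j k : ℕ) (Φ Ψ : TuringFunctional) : Prop :=
  ∀ f : ℕ → ℕ, (∀ x, f x < j) →
    ∃ g : ℕ → ℕ, (∀ x, g x < k) ∧ Φ.evalsTo f g ∧
      ∀ T : ℕ → Bool, {x | T x = true}.Infinite → IsThin k g T →
        ∃ Y : ℕ → Bool, Ψ.evalsTo (join2 f (bc T)) (bc Y) ∧
          {x | Y x = true}.Infinite ∧ IsThin j f Y

variable {Φ Ψ : TuringFunctional} {j k : ℕ}

lemma exists_forces_ge {F : ℕ → ℕ} {TT Y : ℕ → Bool}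
    (hY : Ψ.evalsTo (join2 F (bc TT)) (bc Y)) (hinf : {x | Y x = true}.Infinite) (n : ℕ) :
    ∃ x L, n ≤ x ∧ x < L ∧ (⟨F, TT, L⟩ : Condition).Forces Ψ x := by
  obtain ⟨x, hx, hnx⟩ := hinf.exists_gt n
  obtain ⟨m, hm⟩ := hY x
  refine ⟨x, m + x + 1, hnx.le, by omega,
    Ψ.approx_of_eqOn (show m ≤ 2 * (m + x + 1) by omega) (eqOn_refl _ _) ?_⟩
  simpa [bc, show Y x = true from hx] using hm

lemma not_isThin_of_forcesColors {p : Condition} {F : ℕ → ℕ} {TT Y : ℕ → Bool}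
    (hp : p.ForcesColors Ψ j) (hle : p ≤ ⟨F, TT, p.n⟩)
    (hY : Ψ.evalsTo (join2 F (bc TT)) (bc Y)) : ¬ IsThin j F Y := by
  rintro ⟨c, hc, hYc⟩
  obtain ⟨x, hx, hfx, hxp⟩ := hp c hc
  exact hYc x ((hxp.mono hle).eq_true hY) ((hle.2.1 hx).symm.trans hfx)

lemma exists_forcesColors (Adm : ℕ → Condition → Prop) (h₀ : ∃ p, Adm 0 p)
    (hstep : ∀ i < j, ∀ p, Adm i p →
      ∃ q, p ≤ q ∧ Adm (i + 1) q ∧ ∃ x < q.n, q.f x = i ∧ q.Forces Ψ x) :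
    ∃ q, Adm j q ∧ q.ForcesColors Ψ j := by
  suffices ∀ i ≤ j, ∃ q, Adm i q ∧ q.ForcesColors Ψ i from this j le_rfl
  intro i hi
  induction i with
  | zero =>
    obtain ⟨p, hp⟩ := h₀
    exact ⟨p, hp, fun c hc => absurd hc c.not_lt_zero⟩
  | succ i ih =>
    obtain ⟨p, hp, hpc⟩ := ih (by omega)
    obtain ⟨q, hpq, hq, x, hx, hfx, hxq⟩ := hstep i (by omega) p hp
    refine ⟨q, hq, fun c hc => ?_⟩
    rcases Nat.lt_succ_iff_lt_or_eq.mp hc with hc | rfl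
    · exact hpc.mono hpq c hc
    · exact ⟨x, hx, hfx, hxq⟩

variable (Φ j) in
def AvoidsAbove (D : Finset ℕ) (f₀ : ℕ → ℕ) (n₀ : ℕ) : Prop :=
  ∀ f, (∀ x, f x < j) → EqOn f₀ f (Iio n₀) →
    ∀ x ≥ n₀, ∀ M v, Φ.approx ((List.range M).map f) x = some v → v ∉ D

section Avoiding

variable {D : Finset ℕ} {f₀ : ℕ → ℕ} {n₀ : ℕ}

variable (j f₀ n₀) in
def AdmissibleAbove (p : Condition) : Prop :=
  (∀ x, p.f x < j) ∧ n₀ ≤ p.n ∧ EqOn f₀ p.f (Iio n₀) ∧ ∀ x < p.n, p.T x = true → n₀ ≤ x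

lemma AdmissibleAbove.piecewise {p : Condition} (hp : AdmissibleAbove j f₀ n₀ p) {i n : ℕ}
    (hi : i < j) (hn : p.n ≤ n) :
    AdmissibleAbove j f₀ n₀
      ⟨(Iio p.n).piecewise p.f fun _ => i, (Iio p.n).piecewise p.T fun _ => true, n⟩ := by
  obtain ⟨hpf, hn₀, hf₀, hpT⟩ := hp
  refine ⟨piecewise_const_lt hpf hi, hn₀.trans hn,
    hf₀.trans ((piecewise_eqOn _ _ _).symm.mono (Iio_subset_Iio hn₀)), fun x _ hx => ?_⟩
  by_cases hxp : x < p.n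
  · exact hpT x hxp (by simpa [hxp] using hx)
  · omega

lemma AdmissibleAbove.exists_solution (H : ReducesTS j k Φ Ψ) {d : ℕ} (hd : d ∈ D) (hdk : d < k)
    (havoid : AvoidsAbove Φ j D f₀ n₀) {p : Condition} (hp : AdmissibleAbove j f₀ n₀ p) {i : ℕ}
    (hi : i < j) :
    ∃ Y, Ψ.evalsTo (join2 ((Iio p.n).piecewise p.f fun _ => i)
        (bc ((Iio p.n).piecewise p.T fun _ => true))) (bc Y) ∧
      {x | Y x = true}.Infinite ∧ IsThin j ((Iio p.n).piecewise p.f fun _ => i) Y := by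
  obtain ⟨hF, -, hf₀, hT⟩ := hp.piecewise hi le_rfl
  obtain ⟨g, -, hg, hsol⟩ := H _ hF
  refine hsol _ ((Ici_infinite p.n).mono fun x hx => ?_) ⟨d, hdk, fun x hx hgx => ?_⟩
  · simp [piecewise_eq_of_notMem, not_lt.mpr (mem_Ici.mp hx)]
  · have hx₀ : n₀ ≤ x := by
      by_cases hxp : x < p.n
      · exact hT x hxp hx
      · exact hp.2.1.trans (not_lt.mp hxp)
    obtain ⟨M, hM⟩ := hg x
    exact havoid _ hF hf₀ x hx₀ M _ hM (hgx ▸ hd)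

lemma false_of_avoidsAbove (H : ReducesTS j k Φ Ψ) (hj : 0 < j) {d : ℕ} (hd : d ∈ D)
    (hdk : d < k) (hf₀ : ∀ x, f₀ x < j) (havoid : AvoidsAbove Φ j D f₀ n₀) : False := by
  have hstep : ∀ i < j, ∀ p, AdmissibleAbove j f₀ n₀ p →
      ∃ q, p ≤ q ∧ AdmissibleAbove j f₀ n₀ q ∧ ∃ x < q.n, q.f x = i ∧ q.Forces Ψ x := by
    intro i hi p hp
    obtain ⟨Y, hY, hYinf, -⟩ := hp.exists_solution H hd hdk havoid hi
    obtain ⟨x, L, hpx, hxL, hforce⟩ := exists_forces_ge hY hYinf p.n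
    exact ⟨_, le_mk_piecewise p _ _ (by omega), hp.piecewise hi (by omega), x, hxL,
      by simp [piecewise, not_lt.mpr hpx], hforce⟩
  obtain ⟨q, hq, hqc⟩ := exists_forcesColors (fun _ => AdmissibleAbove j f₀ n₀)
    ⟨⟨f₀, fun _ => false, n₀⟩, hf₀, le_rfl, eqOn_refl _ _, by simp⟩ hstep
  obtain ⟨Y, hY, -, hthin⟩ := hq.exists_solution H hd hdk havoid hj
  exact not_isThin_of_forcesColors hqc (le_mk_piecewise q _ _ le_rfl) hY hthin

end Avoiding

lemma exists_limit (S : Set Condition) {p₀ : Condition} (hp₀ : p₀ ∈ S)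
    (hS : ∀ p ∈ S, ∃ q ∈ S, p ≤ q ∧ ∃ x, p.n ≤ x ∧ x < q.n ∧ q.T x = true) :
    ∃ F TI, {x | TI x = true}.Infinite ∧ p₀ ≤ ⟨F, TI, p₀.n⟩ ∧
      ∀ x, ∃ p ∈ S, x < p.n ∧ p ≤ ⟨F, TI, p.n⟩ := by
  choose! next hnextS hle y hny hyn hy using hS
  let seq : ℕ → Condition := fun t => next^[t] p₀
  have hseq : ∀ t, seq (t + 1) = next (seq t) := fun t => Function.iterate_succ_apply' next t p₀
  have hseqS : ∀ t, seq t ∈ S := fun t => by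
    induction t with
    | zero => exact hp₀
    | succ t ih => rw [hseq]; exact hnextS _ ih
  have hmono : Monotone seq := monotone_nat_of_le_succ fun t => hseq t ▸ hle _ (hseqS t)
  have hn : StrictMono fun t => (seq t).n := strictMono_nat_of_lt_succ fun t =>
    hseq t ▸ (hny _ (hseqS t)).trans_lt (hyn _ (hseqS t))
  have hlt : ∀ x, x < (seq (x + 1)).n := fun x => hn.id_le (x + 1)
  have hlim : ∀ t, seq t ≤ ⟨fun x => (seq (x + 1)).f x, fun x => (seq (x + 1)).T x, (seq t).n⟩ := by
    refine fun t => ⟨le_rfl, fun x hx => ?_, fun x hx => ?_⟩ <;>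
      rcases le_total t (x + 1) with h | h
    · exact (hmono h).2.1 hx
    · exact ((hmono h).2.1 (hlt x)).symm
    · exact (hmono h).2.2 hx
    · exact ((hmono h).2.2 (hlt x)).symm
  refine ⟨_, _, infinite_of_forall_exists_gt fun a => ?_, hlim 0,
    fun x => ⟨_, hseqS _, hlt x, hlim _⟩⟩
  refine ⟨_, ?_, a.lt_succ_self.trans_le ((hn.id_le _).trans (hny _ (hseqS _)))⟩
  have hy' : (seq (a + 2)).T (y (seq (a + 1))) = true := hseq (a + 1) ▸ hy _ (hseqS _)
  exact ((hlim (a + 2)).2.2 (hseq (a + 1) ▸ hyn _ (hseqS _))).symm.trans hy'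

section Confining

variable (Φ) in
def ValuesIn (D : Finset ℕ) (p : Condition) : Prop :=
  ∀ x < p.n, p.T x = true → ∃ v ∈ D, Φ.approx ((List.range p.n).map p.f) x = some v

lemma ValuesIn.mem {D : Finset ℕ} {p : Condition} (hp : ValuesIn Φ D p) {F g : ℕ → ℕ}
    (hF : EqOn p.f F (Iio p.n)) (hg : Φ.evalsTo F g) {x : ℕ} (hx : x < p.n)
    (hT : p.T x = true) : g x ∈ D := by
  obtain ⟨v, hv, happ⟩ := hp x hx hT
  exact hg.eq_of_approx (Φ.approx_of_eqOn le_rfl hF happ) ▸ hv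

/-- Truncating `T` at `L` and waiting until `Φ` has computed the colors of its elements. -/
lemma exists_le_valuesIn {D : Finset ℕ} {F g : ℕ → ℕ} {TT : ℕ → Bool} (hg : Φ.evalsTo F g)
    (hTT : ∀ x, TT x = true → g x ∈ D) (L : ℕ) :
    ∃ q : Condition, ⟨F, TT, L⟩ ≤ q ∧ q.f = F ∧ ValuesIn Φ D q := by
  obtain ⟨N, hN⟩ := hg.exists_uniform L
  refine ⟨⟨F, (Iio L).piecewise TT fun _ => false, max N L⟩,
    ⟨le_max_right N L, eqOn_refl _ _, (piecewise_eqOn _ _ _).symm⟩, rfl, fun y _ hy => ?_⟩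
  have hyL : y < L := by
    by_contra hyL
    simp [piecewise, hyL] at hy
  exact ⟨g y, hTT y (by simpa [piecewise, hyL] using hy),
    Φ.approx_of_eqOn (le_max_left N L) (eqOn_refl _ _) (hN y hyL)⟩

variable (Φ j k) in
def AdmissibleConfined (i : ℕ) (p : Condition) : Prop :=
  (∀ x, p.f x < j) ∧
    ∃ D ⊆ Finset.range k, D.card ≤ i ∧ (0 < i → D.Nonempty) ∧ ValuesIn Φ D p

/-- Above the padding, `T` is an infinite fiber of `Φ` (together with the fibers of `D`), so it
uses at most one `Φ`-color more than before. -/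
lemma AdmissibleConfined.exists_step (H : ReducesTS j k Φ Ψ) (hjk : j < k) {i : ℕ} (hi : i < j)
    {p : Condition} (hp : AdmissibleConfined Φ j k i p) :
    ∃ q, p ≤ q ∧ AdmissibleConfined Φ j k (i + 1) q ∧ ∃ x < q.n, q.f x = i ∧ q.Forces Ψ x := by
  obtain ⟨hpf, D, hDk, hDcard, -, hpD⟩ := hp
  set F := (Iio p.n).piecewise p.f fun _ => i
  have hF : ∀ x, F x < j := piecewise_const_lt hpf hi
  obtain ⟨g, hgk, hg, hsol⟩ := H F hF
  obtain ⟨ds, hds⟩ := Finite.exists_infinite_fiber fun x => (⟨g x, hgk x⟩ : Fin k)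
  let D' := insert ↑ds D
  have hD'k : D' ⊆ Finset.range k := Finset.insert_subset (Finset.mem_range.mpr ds.2) hDk
  have hD'card : D'.card ≤ i + 1 := (Finset.card_insert_le _ _).trans (by omega)
  obtain ⟨c, hck, hcD'⟩ := Finset.exists_mem_notMem_of_card_lt_card
    (t := Finset.range k) (hD'card.trans_lt (by rw [Finset.card_range]; omega))
  set TT := (Iio p.n).piecewise p.T fun x => decide (g x ∈ D')
  have hTT : ∀ x, TT x = true → g x ∈ D' := by
    intro x hx
    by_cases hxp : x < p.n
    · exact Finset.mem_insert_of_mem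
        (hpD.mem (piecewise_eqOn _ _ _).symm hg hxp (by simpa [TT, hxp] using hx))
    · simpa [TT, hxp] using hx
  have hTTinf : {x | TT x = true}.Infinite := by
    refine ((infinite_coe_iff.mp hds).sdiff (finite_Iio p.n)).mono fun x hx => ?_
    have hgx : g x = ds := congrArg Fin.val hx.1
    have hxp : x ∉ Iio p.n := hx.2
    simp [TT, piecewise_eq_of_notMem _ _ _ hxp, D', hgx]
  obtain ⟨Y, hY, hYinf, -⟩ :=
    hsol TT hTTinf ⟨c, Finset.mem_range.mp hck, fun x hx hgx => hcD' (hgx ▸ hTT x hx)⟩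
  obtain ⟨x, L, hpx, hxL, hforce⟩ := exists_forces_ge hY hYinf p.n
  obtain ⟨q, hLq, hqF, hqD'⟩ := exists_le_valuesIn hg hTT L
  refine ⟨q, (le_mk_piecewise p _ _ (hpx.trans hxL.le)).trans hLq,
    ⟨hqF ▸ hF, D', hD'k, hD'card, fun _ => Finset.insert_nonempty _ _, hqD'⟩,
    x, hxL.trans_le hLq.1, by simp [hqF, F, not_lt.mpr hpx], hforce.mono hLq⟩

lemma ValuesIn.exists_extension {D : Finset ℕ} {p : Condition} (hpD : ValuesIn Φ D p)
    (hav : ¬ AvoidsAbove Φ j D p.f p.n) :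
    ∃ p', p ≤ p' ∧ (∀ x, p'.f x < j) ∧ ValuesIn Φ D p' ∧
      ∃ x, p.n ≤ x ∧ x < p'.n ∧ p'.T x = true := by
  simp only [AvoidsAbove, not_forall, not_not] at hav
  obtain ⟨f', hf', hpf', x, hpx, M, v, happ, hv⟩ := hav
  let p' : Condition := ⟨f', (Iio p.n).piecewise p.T fun y => decide (y = x), max M (x + 1)⟩
  have hpp' : p ≤ p' :=
    ⟨(hpx.trans x.le_succ).trans (le_max_right _ _), hpf', (piecewise_eqOn _ _ _).symm⟩
  refine ⟨p', hpp', hf', fun y _ hyT => ?_, x, hpx,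
    x.lt_succ_self.trans_le (le_max_right _ _), by simp [p', not_lt.mpr hpx]⟩
  by_cases hyp : y < p.n
  · obtain ⟨w, hw, happ'⟩ := hpD y hyp (by simpa [p', hyp] using hyT)
    exact ⟨w, hw, Φ.approx_of_eqOn hpp'.1 hpf' happ'⟩
  · obtain rfl : y = x := by simpa [p', hyp] using hyT
    exact ⟨v, hv, Φ.approx_of_eqOn (le_max_left _ _) (eqOn_refl _ _) happ⟩

lemma false_of_forall_not_avoidsAbove (H : ReducesTS j k Φ Ψ) {D : Finset ℕ}
    (hDcard : D.card < k) {q : Condition} (hqf : ∀ x, q.f x < j) (hqD : ValuesIn Φ D q)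
    (hqc : q.ForcesColors Ψ j)
    (hdense : ∀ f n, (∀ x, f x < j) → ¬ AvoidsAbove Φ j D f n) : False := by
  let S : Set Condition := {p | q ≤ p ∧ (∀ x, p.f x < j) ∧ ValuesIn Φ D p}
  have hstep : ∀ p ∈ S, ∃ p' ∈ S, p ≤ p' ∧ ∃ x, p.n ≤ x ∧ x < p'.n ∧ p'.T x = true := by
    rintro p ⟨hqp, hpf, hpD⟩
    obtain ⟨p', hpp', hp'f, hp'D, hx⟩ := hpD.exists_extension (hdense p.f p.n hpf)
    exact ⟨p', ⟨hqp.trans hpp', hp'f, hp'D⟩, hpp', hx⟩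
  obtain ⟨F, TI, hinf, hqlim, hlim⟩ := exists_limit S ⟨le_rfl, hqf, hqD⟩ hstep
  have hF : ∀ x, F x < j := fun x => by
    obtain ⟨p, ⟨-, hpf, -⟩, hx, hp⟩ := hlim x
    exact lt_of_eq_of_lt (hp.2.1 hx).symm (hpf x)
  obtain ⟨g, -, hg, hsol⟩ := H F hF
  obtain ⟨c, hck, hcD⟩ := Finset.exists_mem_notMem_of_card_lt_card
    (s := D) (t := Finset.range k) (by rwa [Finset.card_range])
  have hthin : IsThin k g TI := ⟨c, Finset.mem_range.mp hck, fun x hx hgx => by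
    obtain ⟨p, ⟨-, -, hpD⟩, hxp, hp⟩ := hlim x
    exact hcD (hgx ▸ hpD.mem hp.2.1 hg hxp ((hp.2.2 hxp).trans hx))⟩
  obtain ⟨Y, hY, -, hYthin⟩ := hsol TI hinf hthin
  exact not_isThin_of_forcesColors hqc hqlim hY hYthin

end Confining

end ThinSet

open ThinSet

/-- For `2 ≤ j < k`, the thin set theorem for `j` colors (exponent 1) is not Weihrauch
reducible to the thin set theorem for `k` colors: there are no Turing functionals
`Φ, Ψ` such that for every `f : ℕ → Fin j`, `Φ(f)` is a coloring `ℕ → Fin k`, and for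
every infinite set `T` thin for `Φ(f)`, `Ψ(f ⊕ T)` is an infinite set thin for `f`. -/
theorem stmt16 (j k : ℕ) (hj : 2 ≤ j) (hjk : j < k) :
    ¬ ∃ Φ Ψ : TuringFunctional,
      ∀ f : ℕ → ℕ, (∀ x, f x < j) →
        ∃ g : ℕ → ℕ, (∀ x, g x < k) ∧ Φ.evalsTo f g ∧
          ∀ T : ℕ → Bool, {x | T x = true}.Infinite →
            (∃ c < k, ∀ x, T x = true → g x ≠ c) →
            ∃ Y : ℕ → Bool, Ψ.evalsTo (join2 f (bc T)) (bc Y) ∧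
              {x | Y x = true}.Infinite ∧ ∃ c < j, ∀ x, Y x = true → f x ≠ c := by
  rintro ⟨Φ, Ψ, H⟩
  obtain ⟨q, ⟨hqf, D, hDk, hDcard, hDne, hqD⟩, hqc⟩ :=
    exists_forcesColors (AdmissibleConfined Φ j k)
      ⟨⟨fun _ => 0, fun _ => false, 0⟩, fun _ => show 0 < j by omega, ∅, by simp [ValuesIn]⟩
      fun i hi p hp => hp.exists_step H hjk hi
  by_cases havoid : ∃ f n, (∀ x, f x < j) ∧ AvoidsAbove Φ j D f n
  · obtain ⟨f, n, hf, havoid⟩ := havoid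
    obtain ⟨d, hd⟩ := hDne (by omega)
    exact false_of_avoidsAbove H (by omega) hd (Finset.mem_range.mp (hDk hd)) hf havoid
  · push Not at havoid
    exact false_of_forall_not_avoidsAbove H (by omega) hqf hqD hqc havoid
end

section
/- For each k ≥ 2 there exists a computable sequence ⟨fᵢ : ℕ → Fin k : i ∈ ℕ⟩ of colorings such that no Δ⁰₂ sequence ⟨Dᵢ : i ∈ ℕ⟩ with each Dᵢ an infinite thin set for fᵢ exists; equivalently, the sequence has no ∅′-computable solution as an instance of the sequential thin set theorem for k colors. -/
/-- The halting set `∅′`: the set of `e` such that the `e`-th partial computable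
function halts on input `e`. -/
def haltingSet : Set ℕ :=
  {e | ∃ s, (Nat.Partrec.Code.evaln s (Denumerable.ofNat Nat.Partrec.Code e) e).isSome = true}

/-- The characteristic function of the halting set. -/
noncomputable def chiHalt : ℕ → ℕ := Set.indicator haltingSet fun _ => 1

/-!
A `∅′`-computable function is limit computable, and the limit-computable functions have a uniform
computable enumeration `limitApprox e`. The `e`-th coloring watches column `e` of the `e`-th
approximation and gives `x` the color whose first occurrence among the approximated elements
below `x` is as late as possible. Suppose the `e`-th limit is an infinite set `D` avoiding the
color `c`. Choose `M` such that every color used on `D` is already used on `D ∩ [0, M]`, and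
`x ∈ D` beyond `M` and beyond the stage from which the approximation is correct on `[0, M]`.
Then the color of `x` first occurs at or below `M`, whereas `c` first occurs above `M`,
contradicting the choice of the color of `x`.
-/

open Filter

def argmaxBelow (F : ℕ → ℕ) (k : ℕ) : ℕ :=
  (List.range k).foldl (fun b d => if F b < F d then d else b) 0

lemma argmaxBelow_succ (F : ℕ → ℕ) (k : ℕ) :
    argmaxBelow F (k + 1) = if F (argmaxBelow F k) < F k then k else argmaxBelow F k := by
  rw [argmaxBelow, List.range_succ, List.foldl_append]
  rfl

lemma argmaxBelow_lt (F : ℕ → ℕ) {k : ℕ} (hk : 0 < k) : argmaxBelow F k < k := by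
  obtain ⟨k, rfl⟩ := Nat.exists_eq_add_one_of_ne_zero hk.ne'
  induction k with
  | zero => simp [argmaxBelow]
  | succ k ih =>
    rw [argmaxBelow_succ]
    split_ifs <;> omega

lemma le_argmaxBelow (F : ℕ → ℕ) {k d : ℕ} (hd : d < k) : F d ≤ F (argmaxBelow F k) := by
  induction k with
  | zero => omega
  | succ k ih =>
    rw [argmaxBelow_succ]
    rcases Nat.lt_succ_iff_lt_or_eq.1 hd with hd | rfl
    · have := ih hd
      split_ifs <;> omega
    · split_ifs <;> omega

open Primrec in
lemma Primrec.argmaxBelow {α : Type*} [Primcodable α] {F : α → ℕ → ℕ} (hF : Primrec₂ F) :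
    Primrec₂ fun a k => argmaxBelow (F a) k :=
  list_foldl (list_range.comp snd) (const 0)
    (Primrec.ite (nat_lt.comp (hF.comp (fst.comp fst) (fst.comp snd))
      (hF.comp (fst.comp fst) (snd.comp snd))) (snd.comp snd) (fst.comp snd)).to₂

lemma List.findIdx_range_le {p : ℕ → Bool} {x m : ℕ} (hp : p m) :
    (List.range x).findIdx p ≤ m := by
  by_contra! h
  simpa [hp] using List.not_of_lt_findIdx h

lemma List.findIdx_range_spec {p : ℕ → Bool} {x : ℕ} (h : (List.range x).findIdx p < x) :
    p ((List.range x).findIdx p) := by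
  have := List.findIdx_getElem (p := p) (w := by rwa [List.length_range])
  rwa [List.getElem_range] at this

lemma List.findIdx_range_congr {p q : ℕ → Bool} {x : ℕ} (h : ∀ m < x, p m = q m) :
    (List.range x).findIdx p = (List.range x).findIdx q :=
  le_antisymm (List.findIdx_le_findIdx fun m hm => by simp [h m (List.mem_range.1 hm)])
    (List.findIdx_le_findIdx fun m hm => by simp [h m (List.mem_range.1 hm)])

/-- The least `m < x` in the stage-`x` approximation `A x` with color `d`, and `x` if there is
none (in `List.range x` indices and elements coincide). -/
def firstOcc (A : ℕ → ℕ → Bool) (col : ℕ → ℕ) (x d : ℕ) : ℕ :=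
  (List.range x).findIdx fun m => A x m && col m == d

lemma firstOcc_congr (A : ℕ → ℕ → Bool) {col col' : ℕ → ℕ} {x : ℕ}
    (h : ∀ m < x, col m = col' m) : firstOcc A col x = firstOcc A col' x :=
  funext fun _ => List.findIdx_range_congr fun m hm => by rw [h m hm]

def IsLatestColoring (k : ℕ) (A : ℕ → ℕ → Bool) (col : ℕ → ℕ) : Prop :=
  ∀ x, col x < k ∧ ∀ d < k, firstOcc A col x d ≤ firstOcc A col x (col x)

theorem IsLatestColoring.exists_mem_color_eq {k : ℕ} {A : ℕ → ℕ → Bool} {col : ℕ → ℕ}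
    (hcol : IsLatestColoring k A col) {D : Set ℕ} (hD : D.Infinite)
    (hA : ∀ m, ∀ᶠ s in atTop, (A s m = true ↔ m ∈ D)) {c : ℕ} (hc : c < k) :
    ∃ m ∈ D, col m = c := by
  by_contra! hno
  obtain ⟨M, hM⟩ : ∃ M, ∀ d ∈ col '' D, ∃ w ∈ D, w ≤ M ∧ col w = d := by
    have hfin : (col '' D).Finite :=
      (Set.finite_lt_nat k).subset (by rintro _ ⟨m, -, rfl⟩; exact (hcol m).1)
    have : ∀ᶠ M in atTop, ∀ d ∈ col '' D, ∃ w ∈ D, w ≤ M ∧ col w = d := by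
      refine (eventually_all_finite hfin).2 fun d hd => ?_
      obtain ⟨w, hw, rfl⟩ := hd
      exact (eventually_ge_atTop w).mono fun M hM => ⟨w, hw, hM, rfl⟩
    exact this.exists
  obtain ⟨S, hS⟩ :=
    eventually_atTop.1 ((eventually_all_finite (Set.finite_Iic M)).2 fun m _ => hA m)
  obtain ⟨x, hxD, hx⟩ := hD.exists_gt (max S M)
  have hAx : ∀ m ≤ M, (A x m = true ↔ m ∈ D) := hS x (by omega)
  have h_col : firstOcc A col x (col x) ≤ M := by
    obtain ⟨w, hwD, hwM, hwc⟩ := hM _ ⟨x, hxD, rfl⟩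
    exact (List.findIdx_range_le (by simp [(hAx w hwM).2 hwD, hwc])).trans hwM
  have h_c : M < firstOcc A col x c := by
    by_contra! hle
    have hfirst := List.findIdx_range_spec (x := x) (p := fun m => A x m && col m == c)
      (by unfold firstOcc at hle; omega)
    simp only [Bool.and_eq_true, beq_iff_eq] at hfirst
    exact hno _ ((hAx _ hle).1 hfirst.1) hfirst.2
  have := (hcol x).2 c hc
  omega

def diagColoring (k : ℕ) (A : ℕ → ℕ → Bool) (x : ℕ) : ℕ :=
  argmaxBelow (firstOcc A (fun m => if _ : m < x then diagColoring k A m else 0) x) k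

lemma diagColoring_eq (k : ℕ) (A : ℕ → ℕ → Bool) (x : ℕ) :
    diagColoring k A x = argmaxBelow (firstOcc A (diagColoring k A) x) k := by
  rw [diagColoring]
  exact congrArg (argmaxBelow · k) (firstOcc_congr A fun m hm => dif_pos hm)

lemma isLatestColoring_diagColoring {k : ℕ} (hk : 0 < k) (A : ℕ → ℕ → Bool) :
    IsLatestColoring k A (diagColoring k A) := fun x => by
  rw [diagColoring_eq]
  exact ⟨argmaxBelow_lt _ hk, fun d hd => le_argmaxBelow _ hd⟩

open Primrec in
lemma primrec_diagColoring {α : Type*} [Primcodable α] {A : α → ℕ → ℕ → Bool}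
    (hA : Primrec fun p : α × ℕ × ℕ => A p.1 p.2.1 p.2.2) (k : ℕ) :
    Primrec₂ fun a => diagColoring k (A a) := by
  have hF : Primrec₂ fun (q : α × List ℕ) d => firstOcc (A q.1) (q.2.getD · 0) q.2.length d :=
    (list_findIdx (list_range.comp (list_length.comp (snd.comp fst)))
      (Primrec.and.comp
        (hA.comp ((fst.comp (fst.comp fst)).pair
          ((list_length.comp (snd.comp (fst.comp fst))).pair snd)))
        (Primrec.beq.comp ((list_getD 0).comp (snd.comp (fst.comp fst)) snd)
          (snd.comp fst))).to₂).to₂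
  refine nat_strong_rec _
    (g := fun a l => some (argmaxBelow (firstOcc (A a) (l.getD · 0) l.length) k))
    (option_some.comp ((Primrec.argmaxBelow hF).comp Primrec.id (const k))).to₂ fun a n => ?_
  rw [diagColoring_eq, List.length_map, List.length_range]
  congr 2
  exact firstOcc_congr _ fun m hm => by simp [hm]

open Nat.Partrec (Code)
open Nat.Partrec.Code Denumerable

def IsLimitComputable (Y : ℕ → ℕ) : Prop :=
  ∃ g : ℕ → ℕ → ℕ, Computable₂ g ∧ ∀ n, ∀ᶠ s in atTop, g s n = Y n

def haltApprox (s e : ℕ) : ℕ := (evaln s (ofNat Code e) e).isSome.toNat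

lemma primrec_haltApprox : Primrec₂ haltApprox :=
  (Primrec.dom_bool Bool.toNat).comp (Primrec.option_isSome.comp (primrec_evaln.comp
    ((Primrec.fst.pair ((Primrec.ofNat Code).comp Primrec.snd)).pair Primrec.snd)))

lemma eventually_haltApprox_eq (e : ℕ) : ∀ᶠ s in atTop, haltApprox s e = chiHalt e := by
  by_cases he : e ∈ haltingSet
  · obtain ⟨s₀, hs₀⟩ := id he
    obtain ⟨w, hw⟩ := Option.isSome_iff_exists.1 hs₀
    filter_upwards [eventually_ge_atTop s₀] with s hs
    have : evaln s (ofNat Code e) e = some w := evaln_mono hs hw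
    simp [haltApprox, chiHalt, Set.indicator_of_mem he, this]
  · refine Eventually.of_forall fun s => ?_
    have : (evaln s (ofNat Code e) e).isSome = false := Bool.eq_false_iff.2 fun h => he ⟨s, h⟩
    simp [haltApprox, chiHalt, Set.indicator_of_notMem he, this]

open Primrec in
lemma TuringFunctional.evalsTo.isLimitComputable {Φ : TuringFunctional} {X Y : ℕ → ℕ}
    (hΦ : Φ.evalsTo X Y) {g : ℕ → ℕ → ℕ} (hg : Primrec₂ g)
    (hgX : ∀ n, ∀ᶠ s in atTop, g s n = X n) :
    IsLimitComputable Y := by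
  refine ⟨fun s n => (Φ.approx ((List.range s).map (g s)) n).getD 0, ?_, fun n => ?_⟩
  · exact (Computable.option_getD (Φ.computable.comp
      (list_map (list_range.comp fst) (hg.comp (fst.comp fst) snd).to₂).to_comp Computable.snd)
      (Computable.const 0)).to₂
  obtain ⟨m, hm⟩ := hΦ n
  filter_upwards [(eventually_all_finset (Finset.range m)).2 fun j _ => hgX j,
    eventually_ge_atTop m] with s hgs hms
  have hpre : (List.range m).map X <+: (List.range s).map (g s) := by
    rw [List.map_congr_left fun j hj => (hgs j (by simpa using hj)).symm]
    obtain ⟨t, rfl⟩ := Nat.exists_eq_add_of_le hms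
    rw [List.range_add, List.map_append]
    exact List.prefix_append _ _
  simp [Φ.mono hpre hm]

/-- The output of code `e` on `⟨t, n⟩` for the largest `t ≤ s` converging within `s` steps.
When `e` computes an approximation `g t n` converging to `Y n`, this converges to `Y n`. -/
def limitApprox (e s n : ℕ) : ℕ :=
  (List.range (s + 1)).foldl (fun v t => (evaln s (ofNat Code e) (Nat.pair t n)).getD v) 0

lemma foldl_getD_range_eq {p : ℕ → Option ℕ} {T s v : ℕ} (a : ℕ) (hTs : T ≤ s)
    (hT : (p T).isSome) (hv : ∀ t ≥ T, ∀ w ∈ p t, w = v) :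
    (List.range (s + 1)).foldl (fun acc t => (p t).getD acc) a = v := by
  induction s, hTs using Nat.le_induction with
  | base =>
    obtain ⟨w, hw⟩ := Option.isSome_iff_exists.1 hT
    simpa [List.range_succ, hw] using hv T le_rfl w hw
  | succ s hs ih =>
    rw [List.range_succ, List.foldl_append]
    cases hps : p (s + 1) with
    | none => simpa [hps] using ih
    | some w => simpa [hps] using hv _ (by omega) w hps

open Primrec in
lemma IsLimitComputable.exists_limitApprox_eq {Y : ℕ → ℕ} (hY : IsLimitComputable Y) :
    ∃ e, ∀ n, ∀ᶠ s in atTop, limitApprox e s n = Y n := by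
  obtain ⟨g, hg, hgY⟩ := hY
  obtain ⟨c, hc⟩ := exists_code.1 (Partrec.nat_iff.1
    (hg.comp (fst.comp unpair).to_comp (snd.comp unpair).to_comp).partrec)
  refine ⟨Encodable.encode c, fun n => ?_⟩
  obtain ⟨T, hT⟩ := eventually_atTop.1 (hgY n)
  obtain ⟨s₀, hs₀⟩ := evaln_complete.1 (show g T n ∈ eval c (Nat.pair T n) by simp [hc])
  filter_upwards [eventually_ge_atTop s₀] with s hs
  rw [limitApprox, ofNat_encode]
  refine foldl_getD_range_eq _ ?_ (Option.isSome_iff_exists.2 ⟨_, evaln_mono hs hs₀⟩)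
    fun t ht w hw => ?_
  · have := evaln_bound hs₀
    have := Nat.left_le_pair T n
    omega
  · have := evaln_sound hw
    simp [hc] at this
    rw [this, hT t ht]

open Primrec in
lemma primrec_limitApprox : Primrec fun p : ℕ × ℕ × ℕ => limitApprox p.1 p.2.1 p.2.2 := by
  have hev : Primrec fun q : (ℕ × ℕ × ℕ) × ℕ × ℕ =>
      evaln q.1.2.1 (ofNat Code q.1.1) (Nat.pair q.2.2 q.1.2.2) :=
    primrec_evaln.comp (((fst.comp (snd.comp fst)).pair
        ((Primrec.ofNat Code).comp (fst.comp fst))).pair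
      (Primrec₂.natPair.comp (snd.comp snd) (snd.comp (snd.comp fst))))
  exact list_foldl (list_range.comp (succ.comp (fst.comp snd))) (const 0)
    (option_getD.comp hev (fst.comp snd)).to₂

/-- For each `k ≥ 2` there is a computable sequence `⟨fᵢ : ℕ → Fin k⟩` of colorings
such that no `Δ⁰₂` (equivalently, `∅′`-computable) sequence `⟨Dᵢ⟩` of infinite sets
with each `Dᵢ` thin for `fᵢ` exists.  The candidate solution sequence is coded as a
join `Y` computed from the halting set by a Turing functional, with
`Dᵢ = {x : Y⟨i,x⟩ = 1}`. -/
theorem stmt18 (k : ℕ) (hk : 2 ≤ k) :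
    ∃ f : ℕ → ℕ → ℕ, Computable₂ f ∧ (∀ i x, f i x < k) ∧
      ¬ ∃ Y : ℕ → ℕ, (∃ Ξ : TuringFunctional, Ξ.evalsTo chiHalt Y) ∧
        ∀ i, {x | Y (Nat.pair i x) = 1}.Infinite ∧
          ∃ c < k, ∀ x, Y (Nat.pair i x) = 1 → f i x ≠ c := by
  let A (e s m : ℕ) : Bool := limitApprox e s (Nat.pair e m) == 1
  have hA : Primrec fun p : ℕ × ℕ × ℕ => A p.1 p.2.1 p.2.2 :=
    Primrec.beq.comp (primrec_limitApprox.comp (Primrec.fst.pair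
      ((Primrec.fst.comp Primrec.snd).pair
        (Primrec₂.natPair.comp Primrec.fst (Primrec.snd.comp Primrec.snd))))) (Primrec.const 1)
  have hlatest (e : ℕ) : IsLatestColoring k (A e) (diagColoring k (A e)) :=
    isLatestColoring_diagColoring (by omega) (A e)
  refine ⟨fun e => diagColoring k (A e), (primrec_diagColoring hA k).to_comp,
    fun e x => (hlatest e x).1, ?_⟩
  rintro ⟨Y, ⟨Ξ, hΞ⟩, hsol⟩
  obtain ⟨e, he⟩ :=
    (hΞ.isLimitComputable primrec_haltApprox eventually_haltApprox_eq).exists_limitApprox_eq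
  obtain ⟨hinf, c, hc, hthin⟩ := hsol e
  obtain ⟨m, hm, hmc⟩ := (hlatest e).exists_mem_color_eq hinf
    (fun m => (he (Nat.pair e m)).mono fun s hs => by simp [A, hs]) hc
  exact hthin m hm hmc
end
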